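/- arXiv:0708.1357 — 3 statements merged into one kernel-verified Lean document; each statement's English description precedes it below -/
import Mathlib

section
/- Let χ₁ and χ₂ be shape Wilf equivalent signed permutation matrices and let χ be any signed permutation matrix. Set θ = [[χ₁,0],[0,χ]] and ω = [[χ₂,0],[0,χ]] (block diagonal matrices). Then for every Young diagram λ and every pair of subsets R of the rows of λ and C of the columns of λ, the number of θ-avoiding sparse fillings of λ whose set of rows containing a nonzero entry is exactly R and whose set of columns containing a nonzero entry is exactly C equals the number of ω-avoiding sparse fillings of λ with the same property. In particular, θ and ω are shape Wilf equivalent. -/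
/-!
Call a cell of `λ` white for a filling `f` when some occurrence of `χ` in `f` lies strictly
south-east of it; the white cells form a Young diagram. A sparse filling contains
`[[σ, 0], [0, χ]]` exactly when its white part contains `σ`: an occurrence of `σ` in the white
part is completed by an occurrence of `χ` south-east of its last cell. Refilling the white cells
does not change the white region, because an occurrence of `χ` south-east of a white cell can be
chosen to avoid the white region altogether. Deleting empty rows and columns turns sparse
fillings with prescribed row and column supports into signed transversals of a smaller diagram,
so shape Wilf equivalent `χ₁`, `χ₂` have equinumerous avoiders with any prescribed supports.
Replacing the white part of a `[[χ₁, 0], [0, χ]]`-avoiding filling by its image under such a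
bijection, on the white diagram and with the white supports, gives the required bijection.
-/

open Matrix

/-- A signed permutation matrix: entries in {0,1,-1}, with exactly one nonzero
entry in each row and each column. -/
def IsSignedPermMatrix {n : ℕ} (M : Matrix (Fin n) (Fin n) ℤ) : Prop :=
  (∀ i j, M i j = 0 ∨ M i j = 1 ∨ M i j = -1) ∧
  (∀ i, ∃! j, M i j ≠ 0) ∧
  (∀ j, ∃! i, M i j ≠ 0)

/-- `M` contains the pattern `τ`: some `k×k` submatrix of `M`, taken with rows
and columns in increasing order, equals `τ`. -/
def ContainsPattern {n k : ℕ} (M : Matrix (Fin n) (Fin n) ℤ)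
    (τ : Matrix (Fin k) (Fin k) ℤ) : Prop :=
  ∃ r c : Fin k → Fin n, StrictMono r ∧ StrictMono c ∧
    ∀ a b, M (r a) (c b) = τ a b

/-- Block diagonal matrix [[A,0],[0,B]]. -/
def blockDiag2 {a b : ℕ} (A : Matrix (Fin a) (Fin a) ℤ) (B : Matrix (Fin b) (Fin b) ℤ) :
    Matrix (Fin (a + b)) (Fin (a + b)) ℤ :=
  Matrix.reindex finSumFinEquiv finSumFinEquiv
    (Matrix.fromBlocks A (0 : Matrix (Fin a) (Fin b) ℤ) (0 : Matrix (Fin b) (Fin a) ℤ) B)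

/-- Block diagonal matrix with three blocks. -/
def blockDiag3 {a b c : ℕ} (A : Matrix (Fin a) (Fin a) ℤ) (B : Matrix (Fin b) (Fin b) ℤ)
    (C : Matrix (Fin c) (Fin c) ℤ) : Matrix (Fin (a + b + c)) (Fin (a + b + c)) ℤ :=
  blockDiag2 (blockDiag2 A B) C

/-- Block antidiagonal matrix [[0,A],[B,0]]. -/
def antiBlock2 {a b : ℕ} (A : Matrix (Fin a) (Fin a) ℤ) (B : Matrix (Fin b) (Fin b) ℤ) :
    Matrix (Fin (a + b)) (Fin (a + b)) ℤ :=
  Matrix.reindex finSumFinEquiv (finSumFinEquiv.trans (finCongr (Nat.add_comm b a)))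
    (Matrix.fromBlocks (0 : Matrix (Fin a) (Fin b) ℤ) A B (0 : Matrix (Fin b) (Fin a) ℤ))

/-- For a signed permutation matrix σ, the involution σ' = [[0,σ],[σᵗ,0]]. -/
def primePat {k : ℕ} (σ : Matrix (Fin k) (Fin k) ℤ) :
    Matrix (Fin (k + k)) (Fin (k + k)) ℤ :=
  Matrix.reindex finSumFinEquiv finSumFinEquiv
    (Matrix.fromBlocks (0 : Matrix (Fin k) (Fin k) ℤ) σ σ.transpose
      (0 : Matrix (Fin k) (Fin k) ℤ))

/-- For a signed permutation matrix σ, the involution σ'' = [[0,0,σ],[0,1,0],[σᵗ,0,0]]. -/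
def doublePrimePat {k : ℕ} (σ : Matrix (Fin k) (Fin k) ℤ) :
    Matrix (Fin (k + (1 + k))) (Fin (k + (1 + k))) ℤ :=
  Matrix.reindex ((Equiv.sumCongr (Equiv.refl (Fin k)) finSumFinEquiv).trans finSumFinEquiv)
    ((Equiv.sumCongr (Equiv.refl (Fin k)) finSumFinEquiv).trans finSumFinEquiv)
    (Matrix.fromBlocks
      (0 : Matrix (Fin k) (Fin k) ℤ)
      (Matrix.of fun (i : Fin k) (j : Fin 1 ⊕ Fin k) =>
        Sum.elim (fun _ => (0 : ℤ)) (fun j' => σ i j') j)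
      (Matrix.of fun (i : Fin 1 ⊕ Fin k) (j : Fin k) =>
        Sum.elim (fun _ => (0 : ℤ)) (fun i' => σ.transpose i' j) i)
      (Matrix.fromBlocks (1 : Matrix (Fin 1) (Fin 1) ℤ) 0 0 (0 : Matrix (Fin k) (Fin k) ℤ)))

/-- β_k, the antidiagonal k×k permutation matrix (pattern k(k-1)…1). -/
def betaMat (k : ℕ) : Matrix (Fin k) (Fin k) ℤ :=
  Matrix.of fun i j => if (i : ℕ) + (j : ℕ) + 1 = k then 1 else 0

/-- |SI_n(τ)|: the number of τ-avoiding signed involutions of size n. -/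
noncomputable def SIAvoidCount (n : ℕ) {k : ℕ} (τ : Matrix (Fin k) (Fin k) ℤ) : ℕ :=
  {M : Matrix (Fin n) (Fin n) ℤ |
    IsSignedPermMatrix M ∧ M.IsSymm ∧ ¬ ContainsPattern M τ}.ncard

/-- |B_n(τ)|: the number of τ-avoiding signed permutations of size n. -/
noncomputable def BAvoidCount (n : ℕ) {k : ℕ} (τ : Matrix (Fin k) (Fin k) ℤ) : ℕ :=
  {M : Matrix (Fin n) (Fin n) ℤ | IsSignedPermMatrix M ∧ ¬ ContainsPattern M τ}.ncard

/-- A sparse filling of a Young diagram: values in {0,1,-1}, supported on the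
cells of the diagram, with at most one nonzero entry in each row and column. -/
def IsSparseFilling (μ : YoungDiagram) (f : ℕ × ℕ → ℤ) : Prop :=
  (∀ p, f p ≠ 0 → p ∈ μ.cells) ∧
  (∀ p, f p = 0 ∨ f p = 1 ∨ f p = -1) ∧
  (∀ i, {j : ℕ | f (i, j) ≠ 0}.Subsingleton) ∧
  (∀ j, {i : ℕ | f (i, j) ≠ 0}.Subsingleton)

/-- A signed transversal of a Young diagram: a sparse filling with exactly one
nonzero entry in every (nonempty) row and column. -/
def IsSignedTransversal (μ : YoungDiagram) (f : ℕ × ℕ → ℤ) : Prop :=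
  IsSparseFilling μ f ∧
  (∀ i, (∃ j, (i, j) ∈ μ.cells) → ∃ j, f (i, j) ≠ 0) ∧
  (∀ j, (∃ i, (i, j) ∈ μ.cells) → ∃ i, f (i, j) ≠ 0)

/-- A filling of a Young diagram contains the pattern τ. -/
def YDContains (μ : YoungDiagram) (f : ℕ × ℕ → ℤ) {k : ℕ}
    (τ : Matrix (Fin k) (Fin k) ℤ) : Prop :=
  ∃ r c : Fin k → ℕ, StrictMono r ∧ StrictMono c ∧
    (∀ a b, (r a, c b) ∈ μ.cells) ∧ (∀ a b, f (r a, c b) = τ a b)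

/-- Shape Wilf equivalence of two signed permutation matrices. -/
def ShapeWilfEquiv {k l : ℕ} (σ : Matrix (Fin k) (Fin k) ℤ)
    (τ : Matrix (Fin l) (Fin l) ℤ) : Prop :=
  ∀ μ : YoungDiagram,
    {f : ℕ × ℕ → ℤ | IsSignedTransversal μ f ∧ ¬ YDContains μ f σ}.ncard =
    {f : ℕ × ℕ → ℤ | IsSignedTransversal μ f ∧ ¬ YDContains μ f τ}.ncard

open Set

open scoped Classical

noncomputable section

variable {k l m : ℕ}

section Fillings

def rowSupport (f : ℕ × ℕ → ℤ) : Set ℕ := {i | ∃ j, f (i, j) ≠ 0}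

def colSupport (f : ℕ × ℕ → ℤ) : Set ℕ := {j | ∃ i, f (i, j) ≠ 0}

def avoidingFillings (μ : YoungDiagram) (π : Matrix (Fin k) (Fin k) ℤ) (R C : Set ℕ) :
    Set (ℕ × ℕ → ℤ) :=
  {f | IsSparseFilling μ f ∧ ¬ YDContains μ f π ∧ rowSupport f = R ∧ colSupport f = C}

def avoidingTransversals (μ : YoungDiagram) (π : Matrix (Fin k) (Fin k) ℤ) :
    Set (ℕ × ℕ → ℤ) :=
  {f | IsSignedTransversal μ f ∧ ¬ YDContains μ f π}

def IsOccurrence (μ : YoungDiagram) (f : ℕ × ℕ → ℤ) (π : Matrix (Fin k) (Fin k) ℤ)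
    (r c : Fin k → ℕ) : Prop :=
  StrictMono r ∧ StrictMono c ∧ (∀ a b, (r a, c b) ∈ μ.cells) ∧ ∀ a b, f (r a, c b) = π a b

variable {μ : YoungDiagram} {f : ℕ × ℕ → ℤ}

theorem IsSparseFilling.mem_cells (hf : IsSparseFilling μ f) {i j : ℕ} (h : f (i, j) ≠ 0) :
    (i, j) ∈ μ.cells :=
  hf.1 _ h

theorem IsSparseFilling.rowSupport_finite (hf : IsSparseFilling μ f) :
    (rowSupport f).Finite :=
  (μ.cells.finite_toSet.image Prod.fst).subset fun i ⟨j, hj⟩ => ⟨(i, j), hf.mem_cells hj, rfl⟩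

theorem IsSparseFilling.colSupport_finite (hf : IsSparseFilling μ f) :
    (colSupport f).Finite :=
  (μ.cells.finite_toSet.image Prod.snd).subset fun j ⟨i, hi⟩ => ⟨(i, j), hf.mem_cells hi, rfl⟩

theorem finite_setOf_isSparseFilling (μ : YoungDiagram) :
    {f : ℕ × ℕ → ℤ | IsSparseFilling μ f}.Finite := by
  have hvals : (univ.pi fun _ : μ.cells => ({0, 1, -1} : Set ℤ)).Finite :=
    Finite.pi fun _ => toFinite _
  refine Finite.of_finite_image (f := fun (g : ℕ × ℕ → ℤ) (c : μ.cells) => g c)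
    (hvals.subset ?_) fun f₁ hf₁ f₂ hf₂ h => funext fun p => ?_
  · rintro _ ⟨f, hf, rfl⟩ c -
    rcases hf.2.1 c with h | h | h <;> simp [h]
  · by_cases hp : p ∈ μ.cells
    · exact congrFun h ⟨p, hp⟩
    · rw [not_imp_comm.mp (hf₁.1 p) hp, not_imp_comm.mp (hf₂.1 p) hp]

theorem finite_avoidingFillings (μ : YoungDiagram) (π : Matrix (Fin k) (Fin k) ℤ)
    (R C : Set ℕ) : (avoidingFillings μ π R C).Finite :=
  (finite_setOf_isSparseFilling μ).subset fun _ hf => hf.1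

theorem isSignedTransversal_iff : IsSignedTransversal μ f ↔ IsSparseFilling μ f ∧
    rowSupport f = {i | ∃ j, (i, j) ∈ μ.cells} ∧ colSupport f = {j | ∃ i, (i, j) ∈ μ.cells} := by
  refine ⟨fun ⟨hf, hrow, hcol⟩ => ⟨hf, ?_, ?_⟩, fun ⟨hf, hrow, hcol⟩ => ⟨hf, ?_, ?_⟩⟩
  · exact Subset.antisymm (fun i ⟨j, hj⟩ => ⟨j, hf.mem_cells hj⟩) hrow
  · exact Subset.antisymm (fun j ⟨i, hi⟩ => ⟨i, hf.mem_cells hi⟩) hcol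
  · exact fun i hi => (hrow.symm ▸ hi : i ∈ rowSupport f)
  · exact fun j hj => (hcol.symm ▸ hj : j ∈ colSupport f)

theorem avoidingTransversals_eq (μ : YoungDiagram) (π : Matrix (Fin k) (Fin k) ℤ) :
    avoidingTransversals μ π =
      avoidingFillings μ π {i | ∃ j, (i, j) ∈ μ.cells} {j | ∃ i, (i, j) ∈ μ.cells} := by
  ext f
  simp only [avoidingTransversals, avoidingFillings, mem_ofPred_eq, isSignedTransversal_iff]
  tauto

theorem yDContains_bot_iff {π : Matrix (Fin k) (Fin k) ℤ} : YDContains ⊥ f π ↔ k = 0 := by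
  constructor
  · rintro ⟨r, c, -, -, hcell, -⟩
    refine Nat.eq_zero_of_not_pos fun hk => ?_
    simpa using hcell ⟨0, hk⟩ ⟨0, hk⟩
  · rintro rfl
    exact ⟨Fin.elim0, Fin.elim0, fun a => a.elim0, fun a => a.elim0, fun a => a.elim0,
      fun a => a.elim0⟩

theorem isSignedTransversal_bot_iff : IsSignedTransversal ⊥ f ↔ f = 0 := by
  constructor
  · exact fun hf => funext fun p => not_imp_comm.mp (hf.1.1 p) (by simp)
  · rintro rfl
    refine ⟨⟨fun p hp => absurd rfl hp, fun p => Or.inl rfl, ?_, ?_⟩, ?_, ?_⟩ <;> simp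

theorem avoidingTransversals_bot (π : Matrix (Fin k) (Fin k) ℤ) :
    avoidingTransversals ⊥ π = {f | f = 0 ∧ k ≠ 0} := by
  ext f
  simp [avoidingTransversals, isSignedTransversal_bot_iff, yDContains_bot_iff]

theorem ShapeWilfEquiv.eq_zero_iff {σ : Matrix (Fin k) (Fin k) ℤ}
    {τ : Matrix (Fin l) (Fin l) ℤ} (h : ShapeWilfEquiv σ τ) : k = 0 ↔ l = 0 := by
  have hbot : (avoidingTransversals ⊥ σ).ncard = (avoidingTransversals ⊥ τ).ncard := h ⊥
  rw [avoidingTransversals_bot, avoidingTransversals_bot] at hbot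
  by_cases hk : k = 0 <;> by_cases hl : l = 0 <;> simp_all

end Fillings

section Compression

variable {R C : Set ℕ} {x y : ℕ}

theorem lt_card_toFinset_of_lt_ncard (hx : x < R.ncard) (hf : (Set.ofPred (· ∈ R)).Finite) :
    x < hf.toFinset.card :=
  (ncard_eq_toFinset_card _ hf) ▸ hx

theorem nth_mem_of_lt_ncard (hx : x < R.ncard) : Nat.nth (· ∈ R) x ∈ R :=
  Nat.nth_mem x (lt_card_toFinset_of_lt_ncard hx)

theorem nth_le_nth_of_lt_ncard (hxy : x ≤ y) (hy : y < R.ncard) :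
    Nat.nth (· ∈ R) x ≤ Nat.nth (· ∈ R) y :=
  Nat.nth_le_nth' hxy (lt_card_toFinset_of_lt_ncard hy)

theorem nth_lt_nth_of_lt_ncard (hxy : x < y) (hy : y < R.ncard) :
    Nat.nth (· ∈ R) x < Nat.nth (· ∈ R) y :=
  Nat.nth_lt_nth' hxy (lt_card_toFinset_of_lt_ncard hy)

theorem count_nth_of_lt_ncard (hx : x < R.ncard) :
    Nat.count (· ∈ R) (Nat.nth (· ∈ R) x) = x :=
  Nat.count_nth (lt_card_toFinset_of_lt_ncard hx)

theorem count_lt_ncard (hR : R.Finite) (hx : x ∈ R) : Nat.count (· ∈ R) x < R.ncard := by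
  rw [ncard_eq_toFinset_card _ hR]
  exact Nat.count_lt_card (p := (· ∈ R)) hR hx

theorem eq_of_nth_eq_nth (hx : x < R.ncard) (hy : y < R.ncard)
    (h : Nat.nth (· ∈ R) x = Nat.nth (· ∈ R) y) : x = y := by
  rw [← count_nth_of_lt_ncard hx, h, count_nth_of_lt_ncard hy]

theorem eq_of_count_eq_count (hx : x ∈ R) (hy : y ∈ R)
    (h : Nat.count (· ∈ R) x = Nat.count (· ∈ R) y) : x = y := by
  rw [← Nat.nth_count hx, h, Nat.nth_count hy]

/-- `ν` with the rows outside `R` and the columns outside `C` deleted; `Nat.nth (· ∈ R)`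
enumerates `R` increasingly. -/
def compressDiagram (ν : YoungDiagram) (R C : Set ℕ) : YoungDiagram where
  cells := (Finset.range R.ncard ×ˢ Finset.range C.ncard).filter fun p =>
    (Nat.nth (· ∈ R) p.1, Nat.nth (· ∈ C) p.2) ∈ ν.cells
  isLowerSet := by
    intro q p hqp hp
    simp only [Finset.coe_filter, Finset.mem_product, Finset.mem_range, mem_ofPred_eq] at hp ⊢
    obtain ⟨⟨hp₁, hp₂⟩, hcell⟩ := hp
    refine ⟨⟨hqp.1.trans_lt hp₁, hqp.2.trans_lt hp₂⟩, ν.isLowerSet ?_ hcell⟩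
    exact Prod.mk_le_mk.2 ⟨nth_le_nth_of_lt_ncard hqp.1 hp₁, nth_le_nth_of_lt_ncard hqp.2 hp₂⟩

theorem mem_compressDiagram {ν : YoungDiagram} {p : ℕ × ℕ} :
    p ∈ (compressDiagram ν R C).cells ↔ p.1 < R.ncard ∧ p.2 < C.ncard ∧
      (Nat.nth (· ∈ R) p.1, Nat.nth (· ∈ C) p.2) ∈ ν.cells := by
  simp [compressDiagram, and_assoc]

def compress (R C : Set ℕ) (f : ℕ × ℕ → ℤ) : ℕ × ℕ → ℤ := fun p =>
  if p.1 < R.ncard ∧ p.2 < C.ncard then f (Nat.nth (· ∈ R) p.1, Nat.nth (· ∈ C) p.2) else 0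

def expand (R C : Set ℕ) (T : ℕ × ℕ → ℤ) : ℕ × ℕ → ℤ := fun p =>
  if p.1 ∈ R ∧ p.2 ∈ C then T (Nat.count (· ∈ R) p.1, Nat.count (· ∈ C) p.2) else 0

variable {ν : YoungDiagram} {f T : ℕ × ℕ → ℤ} {π : Matrix (Fin k) (Fin k) ℤ}

theorem compress_ne_zero_iff : compress R C f (x, y) ≠ 0 ↔
    x < R.ncard ∧ y < C.ncard ∧ f (Nat.nth (· ∈ R) x, Nat.nth (· ∈ C) y) ≠ 0 := by
  unfold compress
  split_ifs with h <;> simp only at h <;> simp <;> tauto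

theorem expand_ne_zero_iff : expand R C T (x, y) ≠ 0 ↔
    x ∈ R ∧ y ∈ C ∧ T (Nat.count (· ∈ R) x, Nat.count (· ∈ C) y) ≠ 0 := by
  unfold expand
  split_ifs with h <;> simp only at h <;> simp <;> tauto

theorem isSparseFilling_compress (hf : IsSparseFilling ν f) :
    IsSparseFilling (compressDiagram ν R C) (compress R C f) := by
  refine ⟨fun ⟨x, y⟩ h => ?_, fun p => ?_, fun x y₁ h₁ y₂ h₂ => ?_, fun y x₁ h₁ x₂ h₂ => ?_⟩
  · obtain ⟨hx, hy, h⟩ := compress_ne_zero_iff.1 h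
    exact mem_compressDiagram.2 ⟨hx, hy, hf.mem_cells h⟩
  · unfold compress
    split_ifs
    exacts [hf.2.1 _, Or.inl rfl]
  · obtain ⟨-, hy₁, h₁⟩ := compress_ne_zero_iff.1 h₁
    obtain ⟨-, hy₂, h₂⟩ := compress_ne_zero_iff.1 h₂
    exact eq_of_nth_eq_nth hy₁ hy₂ (hf.2.2.1 _ h₁ h₂)
  · obtain ⟨hx₁, -, h₁⟩ := compress_ne_zero_iff.1 h₁
    obtain ⟨hx₂, -, h₂⟩ := compress_ne_zero_iff.1 h₂
    exact eq_of_nth_eq_nth hx₁ hx₂ (hf.2.2.2 _ h₁ h₂)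

theorem isSignedTransversal_compress (hf : IsSparseFilling ν f) :
    IsSignedTransversal (compressDiagram ν (rowSupport f) (colSupport f))
      (compress (rowSupport f) (colSupport f) f) := by
  refine ⟨isSparseFilling_compress hf, fun x ⟨y, hxy⟩ => ?_, fun y ⟨x, hxy⟩ => ?_⟩
  · obtain ⟨hx, -, -⟩ := mem_compressDiagram.1 hxy
    obtain ⟨j, hj⟩ := nth_mem_of_lt_ncard hx
    have hjC : j ∈ colSupport f := ⟨_, hj⟩
    refine ⟨Nat.count (· ∈ colSupport f) j, compress_ne_zero_iff.2 ⟨hx, ?_, ?_⟩⟩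
    · exact count_lt_ncard hf.colSupport_finite hjC
    · rwa [Nat.nth_count hjC]
  · obtain ⟨-, hy, -⟩ := mem_compressDiagram.1 hxy
    obtain ⟨i, hi⟩ := nth_mem_of_lt_ncard hy
    have hiR : i ∈ rowSupport f := ⟨_, hi⟩
    refine ⟨Nat.count (· ∈ rowSupport f) i, compress_ne_zero_iff.2 ⟨?_, hy, ?_⟩⟩
    · exact count_lt_ncard hf.rowSupport_finite hiR
    · rwa [Nat.nth_count hiR]

theorem not_yDContains_compress (hf : ¬ YDContains ν f π) :
    ¬ YDContains (compressDiagram ν R C) (compress R C f) π := by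
  rintro ⟨r, c, hr, hc, hcell, hval⟩
  have hbound a b := mem_compressDiagram.1 (hcell a b)
  refine hf ⟨fun a => Nat.nth (· ∈ R) (r a), fun b => Nat.nth (· ∈ C) (c b),
    fun a a' h => nth_lt_nth_of_lt_ncard (hr h) (hbound a' a').1,
    fun b b' h => nth_lt_nth_of_lt_ncard (hc h) (hbound b' b').2.1,
    fun a b => (hbound a b).2.2, fun a b => ?_⟩
  rw [← hval, compress, if_pos ⟨(hbound a b).1, (hbound a b).2.1⟩]

theorem expand_compress (hR : R.Finite) (hC : C.Finite) (hfR : rowSupport f ⊆ R)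
    (hfC : colSupport f ⊆ C) : expand R C (compress R C f) = f := by
  funext ⟨i, j⟩
  by_cases hij : i ∈ R ∧ j ∈ C
  · rw [expand, if_pos hij, compress,
      if_pos ⟨count_lt_ncard hR hij.1, count_lt_ncard hC hij.2⟩,
      Nat.nth_count hij.1, Nat.nth_count hij.2]
  · rw [expand, if_neg hij, eq_comm]
    by_contra h
    exact hij ⟨hfR ⟨j, h⟩, hfC ⟨i, h⟩⟩

theorem compress_expand (hT : IsSparseFilling (compressDiagram ν R C) T) :
    compress R C (expand R C T) = T := by
  funext ⟨x, y⟩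
  by_cases hxy : x < R.ncard ∧ y < C.ncard
  · rw [compress, if_pos hxy, expand,
      if_pos ⟨nth_mem_of_lt_ncard hxy.1, nth_mem_of_lt_ncard hxy.2⟩,
      count_nth_of_lt_ncard hxy.1, count_nth_of_lt_ncard hxy.2]
  · rw [compress, if_neg hxy, eq_comm]
    by_contra h
    obtain ⟨hx, hy, -⟩ := mem_compressDiagram.1 (hT.mem_cells h)
    exact hxy ⟨hx, hy⟩

theorem isSparseFilling_expand (hT : IsSparseFilling (compressDiagram ν R C) T) :
    IsSparseFilling ν (expand R C T) := by
  refine ⟨fun ⟨i, j⟩ h => ?_, fun p => ?_, fun i j₁ h₁ j₂ h₂ => ?_, fun j i₁ h₁ i₂ h₂ => ?_⟩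
  · obtain ⟨hi, hj, h⟩ := expand_ne_zero_iff.1 h
    have := (mem_compressDiagram.1 (hT.mem_cells h)).2.2
    rwa [Nat.nth_count hi, Nat.nth_count hj] at this
  · unfold expand
    split_ifs
    exacts [hT.2.1 _, Or.inl rfl]
  · obtain ⟨-, hj₁, h₁⟩ := expand_ne_zero_iff.1 h₁
    obtain ⟨-, hj₂, h₂⟩ := expand_ne_zero_iff.1 h₂
    exact eq_of_count_eq_count hj₁ hj₂ (hT.2.2.1 _ h₁ h₂)
  · obtain ⟨hi₁, -, h₁⟩ := expand_ne_zero_iff.1 h₁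
    obtain ⟨hi₂, -, h₂⟩ := expand_ne_zero_iff.1 h₂
    exact eq_of_count_eq_count hi₁ hi₂ (hT.2.2.2 _ h₁ h₂)

theorem rowSupport_expand (hT : IsSignedTransversal (compressDiagram ν R C) T) (hR : R.Finite)
    (hC : C.Finite) (hRC : ∀ i ∈ R, ∃ j ∈ C, (i, j) ∈ ν.cells) :
    rowSupport (expand R C T) = R := by
  refine Subset.antisymm (fun i ⟨j, h⟩ => (expand_ne_zero_iff.1 h).1) fun i hi => ?_
  obtain ⟨j, hj, hij⟩ := hRC i hi
  have hcell : (Nat.count (· ∈ R) i, Nat.count (· ∈ C) j) ∈ (compressDiagram ν R C).cells := by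
    rw [mem_compressDiagram, Nat.nth_count hi, Nat.nth_count hj]
    exact ⟨count_lt_ncard hR hi, count_lt_ncard hC hj, hij⟩
  obtain ⟨y, hy⟩ := hT.2.1 _ ⟨_, hcell⟩
  have hyC := (mem_compressDiagram.1 (hT.1.mem_cells hy)).2.1
  refine ⟨Nat.nth (· ∈ C) y, expand_ne_zero_iff.2 ⟨hi, nth_mem_of_lt_ncard hyC, ?_⟩⟩
  rwa [count_nth_of_lt_ncard hyC]

theorem colSupport_expand (hT : IsSignedTransversal (compressDiagram ν R C) T) (hR : R.Finite)
    (hC : C.Finite) (hCR : ∀ j ∈ C, ∃ i ∈ R, (i, j) ∈ ν.cells) :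
    colSupport (expand R C T) = C := by
  refine Subset.antisymm (fun j ⟨i, h⟩ => (expand_ne_zero_iff.1 h).2.1) fun j hj => ?_
  obtain ⟨i, hi, hij⟩ := hCR j hj
  have hcell : (Nat.count (· ∈ R) i, Nat.count (· ∈ C) j) ∈ (compressDiagram ν R C).cells := by
    rw [mem_compressDiagram, Nat.nth_count hi, Nat.nth_count hj]
    exact ⟨count_lt_ncard hR hi, count_lt_ncard hC hj, hij⟩
  obtain ⟨x, hx⟩ := hT.2.2 _ ⟨_, hcell⟩
  have hxR := (mem_compressDiagram.1 (hT.1.mem_cells hx)).1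
  refine ⟨Nat.nth (· ∈ R) x, expand_ne_zero_iff.2 ⟨nth_mem_of_lt_ncard hxR, hj, ?_⟩⟩
  rwa [count_nth_of_lt_ncard hxR]

theorem not_yDContains_expand (hπ : IsSignedPermMatrix π) (hR : R.Finite) (hC : C.Finite)
    (hT : ¬ YDContains (compressDiagram ν R C) T π) : ¬ YDContains ν (expand R C T) π := by
  rintro ⟨r, c, hr, hc, hcell, hval⟩
  -- every row and column of an occurrence of `π` carries a nonzero entry
  have hrR a : r a ∈ R := by
    obtain ⟨b, hb, -⟩ := hπ.2.1 a
    exact (expand_ne_zero_iff.1 (hval a b ▸ hb)).1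
  have hcC b : c b ∈ C := by
    obtain ⟨a, ha, -⟩ := hπ.2.2 b
    exact (expand_ne_zero_iff.1 (hval a b ▸ ha)).2.1
  refine hT ⟨fun a => Nat.count (· ∈ R) (r a), fun b => Nat.count (· ∈ C) (c b),
    fun a a' h => Nat.count_strict_mono (hrR a) (hr h),
    fun b b' h => Nat.count_strict_mono (hcC b) (hc h), fun a b => ?_, fun a b => ?_⟩
  · rw [mem_compressDiagram, Nat.nth_count (hrR a), Nat.nth_count (hcC b)]
    exact ⟨count_lt_ncard hR (hrR a), count_lt_ncard hC (hcC b), hcell a b⟩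
  · rw [← hval, expand, if_pos ⟨hrR a, hcC b⟩]

theorem ncard_avoidingFillings_eq_ncard_avoidingTransversals (hπ : IsSignedPermMatrix π)
    (hf : IsSparseFilling ν f) :
    (avoidingFillings ν π (rowSupport f) (colSupport f)).ncard =
      (avoidingTransversals (compressDiagram ν (rowSupport f) (colSupport f)) π).ncard := by
  have hR := hf.rowSupport_finite
  have hC := hf.colSupport_finite
  refine (InvOn.bijOn (f := compress (rowSupport f) (colSupport f))
    (f' := expand (rowSupport f) (colSupport f)) ⟨?_, ?_⟩ ?_ ?_).ncard_eq
  · rintro g ⟨-, -, hgR, hgC⟩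
    exact expand_compress hR hC hgR.subset hgC.subset
  · exact fun T hT => compress_expand hT.1.1
  · rintro g ⟨hg, hgπ, hgR, hgC⟩
    rw [← hgR, ← hgC]
    exact ⟨isSignedTransversal_compress hg, not_yDContains_compress hgπ⟩
  · refine fun T ⟨hT, hTπ⟩ => ⟨isSparseFilling_expand hT.1, not_yDContains_expand hπ hR hC hTπ,
      rowSupport_expand hT hR hC ?_, colSupport_expand hT hR hC ?_⟩
    · exact fun i ⟨j, hij⟩ => ⟨j, ⟨i, hij⟩, hf.mem_cells hij⟩
    · exact fun j ⟨i, hij⟩ => ⟨i, ⟨j, hij⟩, hf.mem_cells hij⟩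

end Compression

theorem ShapeWilfEquiv.ncard_avoidingFillings_eq {σ : Matrix (Fin k) (Fin k) ℤ}
    {τ : Matrix (Fin l) (Fin l) ℤ} (hσ : IsSignedPermMatrix σ) (hτ : IsSignedPermMatrix τ)
    (h : ShapeWilfEquiv σ τ) (ν : YoungDiagram) (R C : Set ℕ) :
    (avoidingFillings ν σ R C).ncard = (avoidingFillings ν τ R C).ncard := by
  by_cases hRC : ∃ f, IsSparseFilling ν f ∧ rowSupport f = R ∧ colSupport f = C
  · obtain ⟨f, hf, rfl, rfl⟩ := hRC
    rw [ncard_avoidingFillings_eq_ncard_avoidingTransversals hσ hf,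
      ncard_avoidingFillings_eq_ncard_avoidingTransversals hτ hf]
    exact h _
  · have hempty {n} (π : Matrix (Fin n) (Fin n) ℤ) : avoidingFillings ν π R C = ∅ :=
      eq_empty_iff_forall_notMem.2 fun f hf => hRC ⟨f, hf.1, hf.2.2⟩
    rw [hempty σ, hempty τ]

theorem ShapeWilfEquiv.of_ncard_avoidingFillings_eq {σ : Matrix (Fin k) (Fin k) ℤ}
    {τ : Matrix (Fin l) (Fin l) ℤ}
    (h : ∀ ν R C, (avoidingFillings ν σ R C).ncard = (avoidingFillings ν τ R C).ncard) :
    ShapeWilfEquiv σ τ := fun μ => by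
  change (avoidingTransversals μ σ).ncard = (avoidingTransversals μ τ).ncard
  rw [avoidingTransversals_eq, avoidingTransversals_eq]
  exact h _ _ _

section WhiteRegion

variable {χ : Matrix (Fin m) (Fin m) ℤ} {μ : YoungDiagram} {f g h : ℕ × ℕ → ℤ} {p q : ℕ × ℕ}

def OccursSouthEast (χ : Matrix (Fin m) (Fin m) ℤ) (μ : YoungDiagram) (f : ℕ × ℕ → ℤ)
    (p : ℕ × ℕ) : Prop :=
  ∃ r c, IsOccurrence μ f χ r c ∧ (∀ x, p.1 < r x) ∧ ∀ y, p.2 < c y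

theorem OccursSouthEast.of_le (hp : OccursSouthEast χ μ f p) (hqp : q ≤ p) :
    OccursSouthEast χ μ f q :=
  let ⟨r, c, hocc, hr, hc⟩ := hp
  ⟨r, c, hocc, fun x => hqp.1.trans_lt (hr x), fun y => hqp.2.trans_lt (hc y)⟩

theorem exists_occurrence_southEast_avoiding {W : Set (ℕ × ℕ)}
    (hW : ∀ q ∈ W, OccursSouthEast χ μ g q) (hp : OccursSouthEast χ μ g p) :
    ∃ r c, IsOccurrence μ g χ r c ∧ (∀ x, p.1 < r x) ∧ (∀ y, p.2 < c y) ∧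
      ∀ x y, (r x, c y) ∉ W := by
  cases m with
  | zero =>
    obtain ⟨r, c, hocc, hr, hc⟩ := hp
    exact ⟨r, c, hocc, hr, hc, fun x => x.elim0⟩
  | succ m =>
    -- an occurrence whose top-left corner maximizes `r 0 + c 0` meets no point of `W`
    let S : Set ℕ := {n | ∃ r c, (IsOccurrence μ g χ r c ∧ (∀ x, p.1 < r x) ∧
      ∀ y, p.2 < c y) ∧ r 0 + c 0 = n}
    have hne : S.Nonempty :=
      let ⟨r, c, hocc⟩ := hp
      ⟨_, r, c, hocc, rfl⟩
    have hbdd : BddAbove S := by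
      refine ⟨μ.cells.sup fun q => q.1 + q.2, ?_⟩
      rintro _ ⟨r, c, ⟨⟨-, -, hcell, -⟩, -⟩, rfl⟩
      exact Finset.le_sup (f := fun q : ℕ × ℕ => q.1 + q.2) (hcell 0 0)
    obtain ⟨r, c, ⟨hocc, hpr, hpc⟩, hmax⟩ := Nat.sSup_mem hne hbdd
    refine ⟨r, c, hocc, hpr, hpc, fun x y hxy => ?_⟩
    obtain ⟨r', c', hocc', hr', hc'⟩ := hW _ hxy
    have hle : r' 0 + c' 0 ≤ sSup S := le_csSup hbdd
      ⟨r', c', ⟨hocc', fun x' => (hpr x).trans (hr' x'), fun y' => (hpc y).trans (hc' y')⟩, rfl⟩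
    have := hocc.1.monotone (Fin.zero_le x)
    have := hocc.2.1.monotone (Fin.zero_le y)
    have := hr' 0
    have := hc' 0
    omega

def whiteDiagram (χ : Matrix (Fin m) (Fin m) ℤ) (μ : YoungDiagram) (f : ℕ × ℕ → ℤ) :
    YoungDiagram where
  cells := μ.cells.filter (OccursSouthEast χ μ f)
  isLowerSet _ _ hqp hp := by
    simp only [Finset.coe_filter, mem_ofPred_eq] at hp ⊢
    exact ⟨μ.isLowerSet hqp hp.1, hp.2.of_le hqp⟩

theorem mem_whiteDiagram :
    p ∈ (whiteDiagram χ μ f).cells ↔ p ∈ μ.cells ∧ OccursSouthEast χ μ f p :=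
  Finset.mem_filter

def whitePart (χ : Matrix (Fin m) (Fin m) ℤ) (μ : YoungDiagram) (f : ℕ × ℕ → ℤ) :
    ℕ × ℕ → ℤ :=
  Set.piecewise ((whiteDiagram χ μ f).cells : Set (ℕ × ℕ)) f 0

def replaceWhite (χ : Matrix (Fin m) (Fin m) ℤ) (μ : YoungDiagram) (f h : ℕ × ℕ → ℤ) :
    ℕ × ℕ → ℤ :=
  Set.piecewise ((whiteDiagram χ μ f).cells : Set (ℕ × ℕ)) h f

theorem whitePart_ne_zero_iff :
    whitePart χ μ f p ≠ 0 ↔ p ∈ (whiteDiagram χ μ f).cells ∧ f p ≠ 0 := by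
  by_cases hp : p ∈ (whiteDiagram χ μ f).cells <;> simp [whitePart, hp]

theorem occursSouthEast_replaceWhite (hp : p ∈ (whiteDiagram χ μ f).cells) :
    OccursSouthEast χ μ (replaceWhite χ μ f h) p := by
  obtain ⟨r, c, ⟨hr, hc, hcell, hval⟩, hpr, hpc, hgray⟩ :=
    exists_occurrence_southEast_avoiding (W := (whiteDiagram χ μ f).cells)
      (fun _ hq => (mem_whiteDiagram.1 hq).2) (mem_whiteDiagram.1 hp).2
  refine ⟨r, c, ⟨hr, hc, hcell, fun a b => ?_⟩, hpr, hpc⟩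
  rw [replaceWhite, piecewise_eq_of_notMem _ _ _ (hgray a b), hval]

theorem whiteDiagram_replaceWhite :
    whiteDiagram χ μ (replaceWhite χ μ f h) = whiteDiagram χ μ f := by
  refine YoungDiagram.ext (Finset.ext fun p => ?_)
  rw [mem_whiteDiagram, mem_whiteDiagram]
  refine ⟨fun ⟨hp, hocc⟩ => ⟨hp, ?_⟩, fun hp => ⟨hp.1, occursSouthEast_replaceWhite
    (mem_whiteDiagram.2 hp)⟩⟩
  obtain ⟨r, c, ⟨hr, hc, hcell, hval⟩, hpr, hpc, hgray⟩ :=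
    exists_occurrence_southEast_avoiding (W := (whiteDiagram χ μ f).cells)
      (fun _ hq => occursSouthEast_replaceWhite hq) hocc
  refine ⟨r, c, ⟨hr, hc, hcell, fun a b => ?_⟩, hpr, hpc⟩
  rw [← hval, replaceWhite, piecewise_eq_of_notMem _ _ _ (hgray a b)]

theorem whitePart_replaceWhite (hh : ∀ p, h p ≠ 0 → p ∈ (whiteDiagram χ μ f).cells) :
    whitePart χ μ (replaceWhite χ μ f h) = h := by
  funext p
  rw [whitePart, whiteDiagram_replaceWhite]
  by_cases hp : p ∈ (whiteDiagram χ μ f).cells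
  · rw [piecewise_eq_of_mem _ _ _ hp, replaceWhite, piecewise_eq_of_mem _ _ _ hp]
  · rw [piecewise_eq_of_notMem _ _ _ hp, Pi.zero_apply, eq_comm]
    exact not_imp_comm.1 (hh p) hp

theorem replaceWhite_replaceWhite (h' : ℕ × ℕ → ℤ) :
    replaceWhite χ μ (replaceWhite χ μ f h) h' = replaceWhite χ μ f h' := by
  rw [replaceWhite, whiteDiagram_replaceWhite]
  funext p
  by_cases hp : p ∈ (whiteDiagram χ μ f).cells <;> simp [replaceWhite, hp]

theorem replaceWhite_whitePart : replaceWhite χ μ f (whitePart χ μ f) = f := by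
  funext p
  by_cases hp : p ∈ (whiteDiagram χ μ f).cells <;> simp [replaceWhite, whitePart, hp]

theorem isSparseFilling_whitePart (hf : IsSparseFilling μ f) :
    IsSparseFilling (whiteDiagram χ μ f) (whitePart χ μ f) := by
  refine ⟨fun p hp => (whitePart_ne_zero_iff.1 hp).1, fun p => ?_,
    fun i => (hf.2.2.1 i).anti fun j hj => (whitePart_ne_zero_iff.1 hj).2,
    fun j => (hf.2.2.2 j).anti fun i hi => (whitePart_ne_zero_iff.1 hi).2⟩
  by_cases hp : p ∈ (whiteDiagram χ μ f).cells
  · rw [whitePart, piecewise_eq_of_mem _ _ _ hp]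
    exact hf.2.1 p
  · simp [whitePart, hp]

theorem subsingleton_piecewise_line {ι : Type*} (ℓ : ι → ℕ × ℕ) {W : Set (ℕ × ℕ)}
    [DecidablePred (· ∈ W)] (hf : {j | f (ℓ j) ≠ 0}.Subsingleton)
    (hh : {j | h (ℓ j) ≠ 0}.Subsingleton) (hhW : ∀ p, h p ≠ 0 → p ∈ W)
    (hline : (∃ j, h (ℓ j) ≠ 0) ↔ ∃ j, ℓ j ∈ W ∧ f (ℓ j) ≠ 0) :
    {j | W.piecewise h f (ℓ j) ≠ 0}.Subsingleton ∧
      ((∃ j, W.piecewise h f (ℓ j) ≠ 0) ↔ ∃ j, f (ℓ j) ≠ 0) := by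
  by_cases hne : ∃ j, h (ℓ j) ≠ 0
  · obtain ⟨j₀, hj₀⟩ := hne
    obtain ⟨j₁, hj₁W, hj₁⟩ := hline.1 ⟨j₀, hj₀⟩
    -- the only nonzero entry of `f` on the line is white, so the line is that of `h`
    have hline_eq : {j | W.piecewise h f (ℓ j) ≠ 0} = {j | h (ℓ j) ≠ 0} := by
      ext j
      by_cases hj : ℓ j ∈ W
      · simp [hj]
      · simp only [mem_ofPred_eq, piecewise_eq_of_notMem _ _ _ hj, ne_eq]
        refine ⟨fun hfj => absurd (hf hfj hj₁ ▸ hj₁W) hj, fun hhj => absurd (hhW _ hhj) hj⟩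
    refine ⟨hline_eq ▸ hh, fun _ => ⟨j₁, hj₁⟩, fun _ => ⟨j₀, ?_⟩⟩
    exact (Set.ext_iff.1 hline_eq j₀).2 hj₀
  · have hline_eq : {j | W.piecewise h f (ℓ j) ≠ 0} = {j | f (ℓ j) ≠ 0} := by
      ext j
      by_cases hj : ℓ j ∈ W
      · simp only [mem_ofPred_eq, piecewise_eq_of_mem _ _ _ hj]
        exact ⟨fun hhj => absurd ⟨j, hhj⟩ hne, fun hfj => absurd (hline.2 ⟨j, hj, hfj⟩) hne⟩
      · simp [hj]
    exact ⟨hline_eq ▸ hf, exists_congr fun j => Set.ext_iff.1 hline_eq j⟩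

theorem row_replaceWhite (hf : IsSparseFilling μ f) (hh : IsSparseFilling (whiteDiagram χ μ f) h)
    (hR : rowSupport h = rowSupport (whitePart χ μ f)) (i : ℕ) :
    {j | replaceWhite χ μ f h (i, j) ≠ 0}.Subsingleton ∧
      ((∃ j, replaceWhite χ μ f h (i, j) ≠ 0) ↔ ∃ j, f (i, j) ≠ 0) :=
  subsingleton_piecewise_line (fun j => (i, j)) (hf.2.2.1 i) (hh.2.2.1 i) hh.1 <| by
    simpa [rowSupport, whitePart_ne_zero_iff] using Set.ext_iff.1 hR i

theorem col_replaceWhite (hf : IsSparseFilling μ f) (hh : IsSparseFilling (whiteDiagram χ μ f) h)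
    (hC : colSupport h = colSupport (whitePart χ μ f)) (j : ℕ) :
    {i | replaceWhite χ μ f h (i, j) ≠ 0}.Subsingleton ∧
      ((∃ i, replaceWhite χ μ f h (i, j) ≠ 0) ↔ ∃ i, f (i, j) ≠ 0) :=
  subsingleton_piecewise_line (fun i => (i, j)) (hf.2.2.2 j) (hh.2.2.2 j) hh.1 <| by
    simpa [colSupport, whitePart_ne_zero_iff] using Set.ext_iff.1 hC j

theorem isSparseFilling_replaceWhite (hf : IsSparseFilling μ f)
    (hh : IsSparseFilling (whiteDiagram χ μ f) h)
    (hR : rowSupport h = rowSupport (whitePart χ μ f))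
    (hC : colSupport h = colSupport (whitePart χ μ f)) :
    IsSparseFilling μ (replaceWhite χ μ f h) := by
  refine ⟨fun p hp => ?_, fun p => ?_, fun i => (row_replaceWhite hf hh hR i).1,
    fun j => (col_replaceWhite hf hh hC j).1⟩
  · by_cases hpW : p ∈ (whiteDiagram χ μ f).cells
    · exact (mem_whiteDiagram.1 hpW).1
    · rw [replaceWhite, piecewise_eq_of_notMem _ _ _ hpW] at hp
      exact hf.1 p hp
  · by_cases hpW : p ∈ (whiteDiagram χ μ f).cells
    · rw [replaceWhite, piecewise_eq_of_mem _ _ _ hpW]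
      exact hh.2.1 p
    · rw [replaceWhite, piecewise_eq_of_notMem _ _ _ hpW]
      exact hf.2.1 p

theorem rowSupport_replaceWhite (hf : IsSparseFilling μ f)
    (hh : IsSparseFilling (whiteDiagram χ μ f) h)
    (hR : rowSupport h = rowSupport (whitePart χ μ f)) :
    rowSupport (replaceWhite χ μ f h) = rowSupport f :=
  Set.ext fun i => (row_replaceWhite hf hh hR i).2

theorem colSupport_replaceWhite (hf : IsSparseFilling μ f)
    (hh : IsSparseFilling (whiteDiagram χ μ f) h)
    (hC : colSupport h = colSupport (whitePart χ μ f)) :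
    colSupport (replaceWhite χ μ f h) = colSupport f :=
  Set.ext fun j => (col_replaceWhite hf hh hC j).2

end WhiteRegion

section BlockDiagonal

variable {σ : Matrix (Fin k) (Fin k) ℤ} {χ : Matrix (Fin m) (Fin m) ℤ} {μ : YoungDiagram}
  {f : ℕ × ℕ → ℤ}

@[simp]
theorem blockDiag2_castAdd_castAdd (A : Matrix (Fin k) (Fin k) ℤ)
    (B : Matrix (Fin m) (Fin m) ℤ) (i j : Fin k) :
    blockDiag2 A B (Fin.castAdd m i) (Fin.castAdd m j) = A i j := by
  simp [blockDiag2]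

@[simp]
theorem blockDiag2_castAdd_natAdd (A : Matrix (Fin k) (Fin k) ℤ)
    (B : Matrix (Fin m) (Fin m) ℤ) (i : Fin k) (j : Fin m) :
    blockDiag2 A B (Fin.castAdd m i) (Fin.natAdd k j) = 0 := by
  simp [blockDiag2]

@[simp]
theorem blockDiag2_natAdd_castAdd (A : Matrix (Fin k) (Fin k) ℤ)
    (B : Matrix (Fin m) (Fin m) ℤ) (i : Fin m) (j : Fin k) :
    blockDiag2 A B (Fin.natAdd k i) (Fin.castAdd m j) = 0 := by
  simp [blockDiag2]

@[simp]
theorem blockDiag2_natAdd_natAdd (A : Matrix (Fin k) (Fin k) ℤ)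
    (B : Matrix (Fin m) (Fin m) ℤ) (i j : Fin m) :
    blockDiag2 A B (Fin.natAdd k i) (Fin.natAdd k j) = B i j := by
  simp [blockDiag2]

theorem Fin.castAdd_lt_natAdd (i : Fin k) (j : Fin m) : Fin.castAdd m i < Fin.natAdd k j := by
  simp only [Fin.lt_def, Fin.val_castAdd, Fin.val_natAdd]
  omega

theorem Fin.strictMono_append {α : Type*} [Preorder α] {u : Fin k → α} {v : Fin m → α}
    (hu : StrictMono u)
    (hv : StrictMono v) (huv : ∀ a x, u a < v x) : StrictMono (Fin.append u v) := by
  intro i j hij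
  induction i using Fin.addCases <;> induction j using Fin.addCases <;>
    simp only [Fin.append_left, Fin.append_right]
  · exact hu ((Fin.strictMono_castAdd m).lt_iff_lt.1 hij)
  · exact huv _ _
  · exact absurd hij (Fin.castAdd_lt_natAdd _ _).asymm
  · exact hv ((Fin.strictMono_natAdd k).lt_iff_lt.1 hij)

theorem yDContains_whitePart_of_yDContains_blockDiag2 (h : YDContains μ f (blockDiag2 σ χ)) :
    YDContains (whiteDiagram χ μ f) (whitePart χ μ f) σ := by
  obtain ⟨r, c, hr, hc, hcell, hval⟩ := h
  have hwhite a b : (r (Fin.castAdd m a), c (Fin.castAdd m b)) ∈ (whiteDiagram χ μ f).cells :=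
    mem_whiteDiagram.2 ⟨hcell _ _, r ∘ Fin.natAdd k, c ∘ Fin.natAdd k,
      ⟨hr.comp (Fin.strictMono_natAdd k), hc.comp (Fin.strictMono_natAdd k),
        fun _ _ => hcell _ _, fun x y => by simp [hval]⟩,
      fun x => hr (Fin.castAdd_lt_natAdd a x), fun y => hc (Fin.castAdd_lt_natAdd b y)⟩
  refine ⟨r ∘ Fin.castAdd m, c ∘ Fin.castAdd m, hr.comp (Fin.strictMono_castAdd m),
    hc.comp (Fin.strictMono_castAdd m), hwhite, fun a b => ?_⟩
  simp [whitePart, piecewise_eq_of_mem _ _ _ (hwhite a b), hval]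

/-- The off-diagonal blocks vanish because each row and column of the occurrence of `σ`
already carries the unique nonzero entry of `f` in it. -/
theorem yDContains_blockDiag2_of_yDContains_whitePart (hσ : IsSignedPermMatrix σ) (hk : 0 < k)
    (hf : IsSparseFilling μ f) (h : YDContains (whiteDiagram χ μ f) (whitePart χ μ f) σ) :
    YDContains μ f (blockDiag2 σ χ) := by
  obtain ⟨r₁, c₁, hr₁, hc₁, hcell₁, hval₁⟩ := h
  have hval a b : f (r₁ a, c₁ b) = σ a b := by
    rw [← hval₁, whitePart, piecewise_eq_of_mem _ _ _ (hcell₁ a b)]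
  let last : Fin k := ⟨k - 1, by omega⟩
  have hlast (a : Fin k) : a ≤ last := Fin.le_def.2 (by simp [last]; omega)
  obtain ⟨r₂, c₂, ⟨hr₂, hc₂, hcell₂, hval₂⟩, hsr, hsc⟩ :=
    (mem_whiteDiagram.1 (hcell₁ last last)).2
  have hrr a x : r₁ a < r₂ x := (hr₁.monotone (hlast a)).trans_lt (hsr x)
  have hcc b y : c₁ b < c₂ y := (hc₁.monotone (hlast b)).trans_lt (hsc y)
  refine ⟨Fin.append r₁ r₂, Fin.append c₁ c₂, Fin.strictMono_append hr₁ hr₂ hrr,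
    Fin.strictMono_append hc₁ hc₂ hcc, fun i j => ?_, fun i j => ?_⟩
  · induction i using Fin.addCases with
    | left a => induction j using Fin.addCases with
      | left b => simpa using (mem_whiteDiagram.1 (hcell₁ a b)).1
      | right y => simpa using μ.isLowerSet (Prod.mk_le_mk.2 ⟨(hrr a y).le, le_rfl⟩) (hcell₂ y y)
    | right x => induction j using Fin.addCases with
      | left b => simpa using μ.isLowerSet (Prod.mk_le_mk.2 ⟨le_rfl, (hcc b x).le⟩) (hcell₂ x x)
      | right y => simpa using hcell₂ x y
  · induction i using Fin.addCases with
    | left a => induction j using Fin.addCases with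
      | left b => simpa using hval a b
      | right y =>
        simp only [Fin.append_left, Fin.append_right, blockDiag2_castAdd_natAdd]
        obtain ⟨b, hb, -⟩ := hσ.2.1 a
        by_contra hne
        exact (hcc b y).ne (hf.2.2.1 _ (show f (r₁ a, c₁ b) ≠ 0 by rwa [hval]) hne)
    | right x => induction j using Fin.addCases with
      | left b =>
        simp only [Fin.append_left, Fin.append_right, blockDiag2_natAdd_castAdd]
        obtain ⟨a, ha, -⟩ := hσ.2.2 b
        by_contra hne
        exact (hrr a x).ne (hf.2.2.2 _ (show f (r₁ a, c₁ b) ≠ 0 by rwa [hval]) hne)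
      | right y => simpa using hval₂ x y

end BlockDiagonal

section Swap

variable {σ : Matrix (Fin k) (Fin k) ℤ} {τ : Matrix (Fin l) (Fin l) ℤ}
  {χ : Matrix (Fin m) (Fin m) ℤ} {μ : YoungDiagram} {R C : Set ℕ}
  {u v : YoungDiagram → Set ℕ → Set ℕ → (ℕ × ℕ → ℤ) → ℕ × ℕ → ℤ}

def swapWhite (χ : Matrix (Fin m) (Fin m) ℤ) (μ : YoungDiagram)
    (u : YoungDiagram → Set ℕ → Set ℕ → (ℕ × ℕ → ℤ) → ℕ × ℕ → ℤ) (f : ℕ × ℕ → ℤ) :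
    ℕ × ℕ → ℤ :=
  replaceWhite χ μ f (u (whiteDiagram χ μ f) (rowSupport (whitePart χ μ f))
    (colSupport (whitePart χ μ f)) (whitePart χ μ f))

theorem whitePart_mem_avoidingFillings (hσ : IsSignedPermMatrix σ) (hk : 0 < k)
    {f : ℕ × ℕ → ℤ} (hf : f ∈ avoidingFillings μ (blockDiag2 σ χ) R C) :
    whitePart χ μ f ∈ avoidingFillings (whiteDiagram χ μ f) σ
      (rowSupport (whitePart χ μ f)) (colSupport (whitePart χ μ f)) :=
  ⟨isSparseFilling_whitePart hf.1,
    fun h => hf.2.1 (yDContains_blockDiag2_of_yDContains_whitePart hσ hk hf.1 h), rfl, rfl⟩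

theorem mapsTo_swapWhite (hσ : IsSignedPermMatrix σ) (hk : 0 < k)
    (hu : ∀ ν R C, MapsTo (u ν R C) (avoidingFillings ν σ R C) (avoidingFillings ν τ R C)) :
    MapsTo (swapWhite χ μ u) (avoidingFillings μ (blockDiag2 σ χ) R C)
      (avoidingFillings μ (blockDiag2 τ χ) R C) := by
  intro f hf
  obtain ⟨hh, hhτ, hR, hC⟩ := hu _ _ _ (whitePart_mem_avoidingFillings hσ hk hf)
  refine ⟨isSparseFilling_replaceWhite hf.1 hh hR hC, fun hcon => hhτ ?_,
    (rowSupport_replaceWhite hf.1 hh hR).trans hf.2.2.1,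
    (colSupport_replaceWhite hf.1 hh hC).trans hf.2.2.2⟩
  have := yDContains_whitePart_of_yDContains_blockDiag2 hcon
  rwa [swapWhite, whiteDiagram_replaceWhite, whitePart_replaceWhite hh.1] at this

theorem leftInvOn_swapWhite (hσ : IsSignedPermMatrix σ) (hk : 0 < k)
    (hu : ∀ ν R C, MapsTo (u ν R C) (avoidingFillings ν σ R C) (avoidingFillings ν τ R C))
    (hvu : ∀ ν R C, LeftInvOn (v ν R C) (u ν R C) (avoidingFillings ν σ R C)) :
    LeftInvOn (swapWhite χ μ v) (swapWhite χ μ u) (avoidingFillings μ (blockDiag2 σ χ) R C) := by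
  intro f hf
  have hwf := whitePart_mem_avoidingFillings hσ hk hf
  obtain ⟨hh, -, hR, hC⟩ := hu _ _ _ hwf
  unfold swapWhite
  rw [whiteDiagram_replaceWhite, whitePart_replaceWhite hh.1, hR, hC, hvu _ _ _ hwf,
    replaceWhite_replaceWhite, replaceWhite_whitePart]

theorem ncard_avoidingFillings_blockDiag2_eq (hσ : IsSignedPermMatrix σ) (hk : 0 < k)
    (hτ : IsSignedPermMatrix τ) (hl : 0 < l)
    (h : ∀ ν R C, (avoidingFillings ν σ R C).ncard = (avoidingFillings ν τ R C).ncard)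
    (χ : Matrix (Fin m) (Fin m) ℤ) (μ : YoungDiagram) (R C : Set ℕ) :
    (avoidingFillings μ (blockDiag2 σ χ) R C).ncard =
      (avoidingFillings μ (blockDiag2 τ χ) R C).ncard := by
  have hbij ν R C : ∃ u, BijOn u (avoidingFillings ν σ R C) (avoidingFillings ν τ R C) := by
    refine (finite_avoidingFillings ν σ R C).exists_bijOn_of_encard_eq ?_
    rw [← (finite_avoidingFillings ν σ R C).cast_ncard_eq,
      ← (finite_avoidingFillings ν τ R C).cast_ncard_eq, h]
  choose u hu using hbij
  have hinv ν R C := (hu ν R C).invOn_invFunOn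
  refine (InvOn.bijOn ⟨?_, ?_⟩ (mapsTo_swapWhite hσ hk fun ν R C => (hu ν R C).mapsTo)
    (mapsTo_swapWhite hτ hl fun ν R C => ((hu ν R C).symm (hinv ν R C).symm).mapsTo)).ncard_eq
  · exact leftInvOn_swapWhite hσ hk (fun ν R C => (hu ν R C).mapsTo) fun ν R C => (hinv ν R C).1
  · exact leftInvOn_swapWhite hτ hl (fun ν R C => ((hu ν R C).symm (hinv ν R C).symm).mapsTo)
      fun ν R C => (hinv ν R C).2

end Swap

end

theorem stmt0_general {a b m : ℕ} (χ₁ : Matrix (Fin a) (Fin a) ℤ) (χ₂ : Matrix (Fin b) (Fin b) ℤ)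
    (χ : Matrix (Fin m) (Fin m) ℤ)
    (h1 : IsSignedPermMatrix χ₁) (h2 : IsSignedPermMatrix χ₂)
    (heq : ShapeWilfEquiv χ₁ χ₂) :
    (∀ (μ : YoungDiagram) (R C : Set ℕ),
      {f : ℕ × ℕ → ℤ | IsSparseFilling μ f ∧ ¬ YDContains μ f (blockDiag2 χ₁ χ) ∧
        {i | ∃ j, f (i, j) ≠ 0} = R ∧ {j | ∃ i, f (i, j) ≠ 0} = C}.ncard =
      {f : ℕ × ℕ → ℤ | IsSparseFilling μ f ∧ ¬ YDContains μ f (blockDiag2 χ₂ χ) ∧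
        {i | ∃ j, f (i, j) ≠ 0} = R ∧ {j | ∃ i, f (i, j) ≠ 0} = C}.ncard) ∧
    ShapeWilfEquiv (blockDiag2 χ₁ χ) (blockDiag2 χ₂ χ) := by
  have hcount (μ : YoungDiagram) (R C : Set ℕ) :
      (avoidingFillings μ (blockDiag2 χ₁ χ) R C).ncard =
        (avoidingFillings μ (blockDiag2 χ₂ χ) R C).ncard := by
    rcases Nat.eq_zero_or_pos a with rfl | ha
    · obtain rfl := heq.eq_zero_iff.1 rfl
      rw [Subsingleton.elim χ₁ χ₂]
    · exact ncard_avoidingFillings_blockDiag2_eq h1 ha h2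
        (Nat.pos_of_ne_zero (mt heq.eq_zero_iff.2 ha.ne')) (heq.ncard_avoidingFillings_eq h1 h2)
        χ μ R C
  exact ⟨hcount, ShapeWilfEquiv.of_ncard_avoidingFillings_eq hcount⟩

/-- if χ₁ and χ₂ are shape Wilf equivalent signed permutation matrices
and χ is any signed permutation matrix, then for every Young diagram λ and prescribed
sets R of nonzero rows and C of nonzero columns, the [[χ₁,0],[0,χ]]-avoiding sparse
fillings with that row/column support are equinumerous with the [[χ₂,0],[0,χ]]-avoiding
ones; in particular the two block patterns are shape Wilf equivalent. -/
theorem stmt0 {a b m : ℕ} (χ₁ : Matrix (Fin a) (Fin a) ℤ) (χ₂ : Matrix (Fin b) (Fin b) ℤ)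
    (χ : Matrix (Fin m) (Fin m) ℤ)
    (h1 : IsSignedPermMatrix χ₁) (h2 : IsSignedPermMatrix χ₂) (hχ : IsSignedPermMatrix χ)
    (heq : ShapeWilfEquiv χ₁ χ₂) :
    (∀ (μ : YoungDiagram) (R C : Set ℕ),
      {f : ℕ × ℕ → ℤ | IsSparseFilling μ f ∧ ¬ YDContains μ f (blockDiag2 χ₁ χ) ∧
        {i | ∃ j, f (i, j) ≠ 0} = R ∧ {j | ∃ i, f (i, j) ≠ 0} = C}.ncard =
      {f : ℕ × ℕ → ℤ | IsSparseFilling μ f ∧ ¬ YDContains μ f (blockDiag2 χ₂ χ) ∧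
        {i | ∃ j, f (i, j) ≠ 0} = R ∧ {j | ∃ i, f (i, j) ≠ 0} = C}.ncard) ∧
    ShapeWilfEquiv (blockDiag2 χ₁ χ) (blockDiag2 χ₂ χ) :=
  stmt0_general χ₁ χ₂ χ h1 h2 heq
end

section
/- Let σ and τ be NE-shape Wilf equivalent signed permutation matrices of size k. Then for every n ≥ 1 and every subset F ⊆ {1,…,n}, the number of signed involutions π ∈ SI_n avoiding σ' whose set of fixed points (positions i with |π_i| = i, i.e., indices i whose row and column of the matrix of π have their unique nonzero entry on the diagonal) equals F is the same as the number of signed involutions in SI_n avoiding τ' with fixed-point set F. In particular, |SI_n(σ')| = |SI_n(τ')| for every n, i.e., σ' and τ' are I-Wilf equivalent. -/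
/-!
A signed involution splits `{1, …, n}` into its fixed points, the *openers* (smaller ends of
2-cycles) and the *closers*. Once these sets and the signs of the fixed points are fixed, the
involution is determined by its entries in opener rows and closer columns above the diagonal,
and these form a signed transversal of an NE-shape (cell `(o, c)` present iff `o < c`). By
symmetry, the involution contains `σ'` exactly when `σ` occurs above the diagonal, i.e. when this
transversal contains `σ`. So each class of `σ'`-avoiding involutions is equinumerous with the
`σ`-avoiding transversals of one NE-shape, NE-shape Wilf equivalence matches the classes for `σ`
and `τ`, and summing over classes gives both counts.
-/

open Matrix

/-- An NE-shape: a top-right justified diagram with weakly decreasing row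
lengths, i.e. the reflection of a Young diagram through a vertical axis. -/
structure NEShape where
  width : ℕ
  cells : Finset (ℕ × ℕ)
  col_lt : ∀ p ∈ cells, p.2 < width
  upRight : ∀ p ∈ cells, ∀ i j : ℕ, i ≤ p.1 → p.2 ≤ j → j < width → (i, j) ∈ cells

/-- A sparse filling of an NE-shape. -/
def NEIsSparseFilling (S : NEShape) (f : ℕ × ℕ → ℤ) : Prop :=
  (∀ p, f p ≠ 0 → p ∈ S.cells) ∧
  (∀ p, f p = 0 ∨ f p = 1 ∨ f p = -1) ∧
  (∀ i, {j : ℕ | f (i, j) ≠ 0}.Subsingleton) ∧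
  (∀ j, {i : ℕ | f (i, j) ≠ 0}.Subsingleton)

/-- A signed transversal of an NE-shape. -/
def NEIsSignedTransversal (S : NEShape) (f : ℕ × ℕ → ℤ) : Prop :=
  NEIsSparseFilling S f ∧
  (∀ i, (∃ j, (i, j) ∈ S.cells) → ∃ j, f (i, j) ≠ 0) ∧
  (∀ j, (∃ i, (i, j) ∈ S.cells) → ∃ i, f (i, j) ≠ 0)

/-- A filling of an NE-shape contains the pattern τ. -/
def NEContains (S : NEShape) (f : ℕ × ℕ → ℤ) {k : ℕ}
    (τ : Matrix (Fin k) (Fin k) ℤ) : Prop :=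
  ∃ r c : Fin k → ℕ, StrictMono r ∧ StrictMono c ∧
    (∀ a b, (r a, c b) ∈ S.cells) ∧ (∀ a b, f (r a, c b) = τ a b)

/-- NE-shape Wilf equivalence of two signed permutation matrices. -/
def NEShapeWilfEquiv {k l : ℕ} (σ : Matrix (Fin k) (Fin k) ℤ)
    (τ : Matrix (Fin l) (Fin l) ℤ) : Prop :=
  ∀ S : NEShape,
    {f : ℕ × ℕ → ℤ | NEIsSignedTransversal S f ∧ ¬ NEContains S f σ}.ncard =
    {f : ℕ × ℕ → ℤ | NEIsSignedTransversal S f ∧ ¬ NEContains S f τ}.ncard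

open Finset

theorem Set.ncard_inter_preimage_eq_sum {α β : Type*} [DecidableEq β] {s : Set α}
    (hs : s.Finite) (g : α → β) (Q : Finset β) :
    (s ∩ g ⁻¹' Q).ncard = ∑ b ∈ Q, (s ∩ g ⁻¹' {b}).ncard := by
  have hfib : ∀ b, s ∩ g ⁻¹' {b} = ↑(hs.toFinset.filter fun a => g a = b) := by
    intro b; ext; simp
  have hQ : s ∩ g ⁻¹' Q = ↑(hs.toFinset.filter fun a => g a ∈ Q) := by
    ext; simp
  rw [hQ, Set.ncard_coe_finset,
    Finset.card_eq_sum_card_fiberwise (s := hs.toFinset.filter fun a => g a ∈ Q) (t := Q)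
      fun a ha => (Finset.mem_filter.1 ha).2]
  refine Finset.sum_congr rfl fun b hb => ?_
  rw [hfib, Set.ncard_coe_finset, Finset.filter_filter]
  congr 1
  exact Finset.filter_congr fun a _ => ⟨fun h => h.2, fun h => ⟨h ▸ hb, h⟩⟩

theorem Set.ncard_inter_preimage_eq_of_ncard_fiber_eq {α β : Type*} [Fintype β] {s t : Set α}
    (hs : s.Finite) (ht : t.Finite) (g : α → β)
    (h : ∀ b, (s ∩ g ⁻¹' {b}).ncard = (t ∩ g ⁻¹' {b}).ncard) (Q : Set β) :
    (s ∩ g ⁻¹' Q).ncard = (t ∩ g ⁻¹' Q).ncard := by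
  classical
  have hQ : Q = ↑Q.toFinset := Q.coe_toFinset.symm
  rw [hQ, Set.ncard_inter_preimage_eq_sum hs, Set.ncard_inter_preimage_eq_sum ht]
  exact Finset.sum_congr rfl fun b _ => h b

namespace IsSignedPermMatrix

variable {n : ℕ} {M : Matrix (Fin n) (Fin n) ℤ}

theorem col_eq (hM : IsSignedPermMatrix M) {i j j' : Fin n} (h : M i j ≠ 0) (h' : M i j' ≠ 0) :
    j = j' :=
  (hM.2.1 i).unique h h'

theorem row_eq (hM : IsSignedPermMatrix M) {i i' j : Fin n} (h : M i j ≠ 0) (h' : M i' j ≠ 0) :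
    i = i' :=
  (hM.2.2 j).unique h h'

theorem of_isSymm (hval : ∀ i j, M i j = 0 ∨ M i j = 1 ∨ M i j = -1)
    (hrow : ∀ i, ∃! j, M i j ≠ 0) (hsym : M.IsSymm) : IsSignedPermMatrix M :=
  ⟨hval, hrow, fun j => by simpa only [hsym.apply] using hrow j⟩

end IsSignedPermMatrix

theorem setOf_isSignedPermMatrix_finite (n : ℕ) :
    {M : Matrix (Fin n) (Fin n) ℤ | IsSignedPermMatrix M}.Finite := by
  have hvals : ({0, 1, -1} : Set ℤ).Finite := by simp
  refine (Set.Finite.pi fun _ : Fin n => Set.Finite.pi fun _ : Fin n => hvals).subset ?_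
  intro M hM i _ j _
  rcases hM.1 i j with h | h | h <;> simp [h]

section PrimePattern

variable {k : ℕ} (σ : Matrix (Fin k) (Fin k) ℤ) (a b : Fin k)

@[simp] theorem primePat_castAdd_castAdd :
    primePat σ (Fin.castAdd k a) (Fin.castAdd k b) = 0 := by
  simp [primePat]

@[simp] theorem primePat_castAdd_natAdd :
    primePat σ (Fin.castAdd k a) (Fin.natAdd k b) = σ a b := by
  simp only [primePat, reindex_apply, submatrix_apply, finSumFinEquiv_symm_apply_castAdd,
    finSumFinEquiv_symm_apply_natAdd, fromBlocks_apply₁₂]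

@[simp] theorem primePat_natAdd_castAdd :
    primePat σ (Fin.natAdd k a) (Fin.castAdd k b) = σ b a := by
  simp only [primePat, reindex_apply, submatrix_apply, finSumFinEquiv_symm_apply_castAdd,
    finSumFinEquiv_symm_apply_natAdd, fromBlocks_apply₂₁, transpose_apply]

@[simp] theorem primePat_natAdd_natAdd :
    primePat σ (Fin.natAdd k a) (Fin.natAdd k b) = 0 := by
  simp only [primePat, reindex_apply, submatrix_apply, finSumFinEquiv_symm_apply_natAdd,
    fromBlocks_apply₂₂, Matrix.zero_apply]

end PrimePattern

def ContainsPatternAboveDiag {n k : ℕ} (M : Matrix (Fin n) (Fin n) ℤ)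
    (σ : Matrix (Fin k) (Fin k) ℤ) : Prop :=
  ∃ r c : Fin k → Fin n, StrictMono r ∧ StrictMono c ∧ (∀ a b, r a < c b) ∧
    ∀ a b, M (r a) (c b) = σ a b

theorem strictMono_fin_append {m k : ℕ} {α : Type*} [Preorder α] {u : Fin m → α}
    {v : Fin k → α} (hu : StrictMono u) (hv : StrictMono v) (huv : ∀ a b, u a < v b) :
    StrictMono (Fin.append u v) := by
  intro i j hij
  induction i using Fin.addCases <;> induction j using Fin.addCases <;>
    simp only [Fin.append_left, Fin.append_right] <;>
    simp only [Fin.lt_def, Fin.val_castAdd, Fin.val_natAdd] at hij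
  · exact hu (Fin.lt_def.2 hij)
  · exact huv _ _
  · omega
  · exact hv (Fin.lt_def.2 (by omega))

/-- Either the `σ`-block of an occurrence of `σ'` already lies above the diagonal, or, by symmetry,
the mirror image of its `σᵗ`-block does. -/
theorem containsPattern_primePat_iff {n k : ℕ} {M : Matrix (Fin n) (Fin n) ℤ}
    {σ : Matrix (Fin k) (Fin k) ℤ} (hM : IsSignedPermMatrix M) (hsym : M.IsSymm)
    (hσ : IsSignedPermMatrix σ) :
    ContainsPattern M (primePat σ) ↔ ContainsPatternAboveDiag M σ := by
  constructor
  · rintro ⟨r, c, hr, hc, hval⟩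
    by_cases hsep : ∀ a b, r (Fin.castAdd k a) < c (Fin.natAdd k b)
    · refine ⟨fun a => r (Fin.castAdd k a), fun b => c (Fin.natAdd k b),
        hr.comp (Fin.strictMono_castAdd k), hc.comp (Fin.strictMono_natAdd k), hsep, fun a b => ?_⟩
      rw [hval, primePat_castAdd_natAdd]
    · push Not at hsep
      obtain ⟨a₀, b₀, hle⟩ := hsep
      refine ⟨fun a => c (Fin.castAdd k a), fun b => r (Fin.natAdd k b),
        hc.comp (Fin.strictMono_castAdd k), hr.comp (Fin.strictMono_natAdd k),
        fun a b => ?_, fun a b => ?_⟩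
      · calc c (Fin.castAdd k a) < c (Fin.natAdd k b₀) := hc (by simp [Fin.lt_def]; omega)
          _ ≤ r (Fin.castAdd k a₀) := hle
          _ < r (Fin.natAdd k b) := hr (by simp [Fin.lt_def]; omega)
      · rw [← hsym.apply, hval, primePat_natAdd_castAdd]
  · rintro ⟨r, c, hr, hc, hrc, hval⟩
    refine ⟨Fin.append r c, Fin.append r c, strictMono_fin_append hr hc hrc,
      strictMono_fin_append hr hc hrc, fun i j => ?_⟩
    induction i using Fin.addCases with
    | left a =>
      induction j using Fin.addCases with
      | left b =>
        obtain ⟨b₀, hb₀, -⟩ := hσ.2.1 a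
        simp only [Fin.append_left, primePat_castAdd_castAdd]
        by_contra h
        exact (hrc b b₀).ne (hM.col_eq h (by rwa [hval]))
      | right b => simpa only [Fin.append_left, Fin.append_right, primePat_castAdd_natAdd]
          using hval a b
    | right a =>
      induction j using Fin.addCases with
      | left b =>
        simpa only [Fin.append_left, Fin.append_right, primePat_natAdd_castAdd, hsym.apply]
          using hval b a
      | right b =>
        obtain ⟨a₀, ha₀, -⟩ := hσ.2.2 b
        simp only [Fin.append_right, primePat_natAdd_natAdd]
        by_contra h
        exact (hrc a₀ a).ne' (hM.row_eq h (by rwa [hval]))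

namespace Finset

variable {n : ℕ} (s : Finset (Fin n))

/-- The `r`-th smallest element of `s`; past the end, the junk value `n + r` keeps it strictly
monotone. -/
def nthVal (r : ℕ) : ℕ :=
  if h : r < s.card then s.orderEmbOfFin rfl ⟨r, h⟩ else n + r

def rankOf (i : Fin n) : ℕ :=
  if h : i ∈ s then (s.orderIsoOfFin rfl).symm ⟨i, h⟩ else 0

variable {s}

theorem nthVal_lt {r : ℕ} (h : r < s.card) : s.nthVal r < n := by
  simp only [nthVal, dif_pos h, Fin.is_lt]

theorem strictMono_nthVal : StrictMono s.nthVal := by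
  intro r r' hrr'
  by_cases h' : r' < s.card
  · have h : r < s.card := hrr'.trans h'
    simp only [nthVal, dif_pos h, dif_pos h']
    exact (s.orderEmbOfFin rfl).strictMono (show (⟨r, h⟩ : Fin s.card) < ⟨r', h'⟩ from hrr')
  · have := nthVal_lt (s := s) (r := r)
    simp only [nthVal, dif_neg h'] at this ⊢
    split_ifs at this ⊢ <;> omega

theorem rankOf_lt_card {i : Fin n} (hi : i ∈ s) : s.rankOf i < s.card := by
  simp only [rankOf, dif_pos hi, Fin.is_lt]

theorem nthVal_rankOf {i : Fin n} (hi : i ∈ s) : s.nthVal (s.rankOf i) = i := by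
  rw [nthVal, dif_pos (rankOf_lt_card hi)]
  simp only [rankOf, dif_pos hi, Fin.eta, ← coe_orderIsoOfFin_apply, OrderIso.apply_symm_apply]

theorem exists_rankOf_eq {r : ℕ} (h : r < s.card) : ∃ i ∈ s, s.rankOf i = r :=
  ⟨s.orderIsoOfFin rfl ⟨r, h⟩, (s.orderIsoOfFin rfl ⟨r, h⟩).2, by
    simp only [rankOf, dif_pos (s.orderIsoOfFin rfl ⟨r, h⟩).2, Subtype.coe_eta,
      OrderIso.symm_apply_apply]⟩

theorem rankOf_lt_rankOf_iff {i j : Fin n} (hi : i ∈ s) (hj : j ∈ s) :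
    s.rankOf i < s.rankOf j ↔ i < j := by
  rw [← strictMono_nthVal.lt_iff_lt, nthVal_rankOf hi, nthVal_rankOf hj, Fin.lt_def]

theorem rankOf_inj {i j : Fin n} (hi : i ∈ s) (hj : j ∈ s) :
    s.rankOf i = s.rankOf j ↔ i = j := by
  rw [← strictMono_nthVal.injective.eq_iff, nthVal_rankOf hi, nthVal_rankOf hj, Fin.val_inj]

end Finset

section ArcShape

variable {n : ℕ} (O C : Finset (Fin n))

/-- Rows are the elements of `O`, columns those of `C`, both in increasing order, and the cell
`(o, c)` is present when `o < c`. -/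
def arcShape : NEShape where
  width := C.card
  cells := (range O.card ×ˢ range C.card).filter fun p => O.nthVal p.1 < C.nthVal p.2
  col_lt p hp := by
    simp only [mem_filter, mem_product, mem_range] at hp
    exact hp.1.2
  upRight p hp i j hi hj hjw := by
    simp only [mem_filter, mem_product, mem_range] at hp ⊢
    refine ⟨⟨hi.trans_lt hp.1.1, hjw⟩, ?_⟩
    calc O.nthVal i ≤ O.nthVal p.1 := Finset.strictMono_nthVal.monotone hi
      _ < C.nthVal p.2 := hp.2
      _ ≤ C.nthVal j := Finset.strictMono_nthVal.monotone hj

variable {O C}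

theorem mem_arcShape {p : ℕ × ℕ} :
    p ∈ (arcShape O C).cells ↔ p.1 < O.card ∧ p.2 < C.card ∧ O.nthVal p.1 < C.nthVal p.2 := by
  simp [arcShape, and_assoc]

theorem rankOf_mem_arcShape_iff {o c : Fin n} (ho : o ∈ O) (hc : c ∈ C) :
    (O.rankOf o, C.rankOf c) ∈ (arcShape O C).cells ↔ o < c := by
  simp [mem_arcShape, Finset.nthVal_rankOf, Finset.rankOf_lt_card, ho, hc]

theorem exists_of_mem_arcShape {p : ℕ × ℕ} (hp : p ∈ (arcShape O C).cells) :
    ∃ o ∈ O, ∃ c ∈ C, o < c ∧ p = (O.rankOf o, C.rankOf c) := by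
  obtain ⟨h₁, h₂, -⟩ := mem_arcShape.1 hp
  obtain ⟨o, ho, ho'⟩ := Finset.exists_rankOf_eq h₁
  obtain ⟨c, hc, hc'⟩ := Finset.exists_rankOf_eq h₂
  have hp' : p = (O.rankOf o, C.rankOf c) := Prod.ext ho'.symm hc'.symm
  exact ⟨o, ho, c, hc, (rankOf_mem_arcShape_iff ho hc).1 (hp' ▸ hp), hp'⟩

end ArcShape

section ArcFilling

variable {n : ℕ} {O C : Finset (Fin n)}

variable (O C) in
def arcFilling (M : Matrix (Fin n) (Fin n) ℤ) (p : ℕ × ℕ) : ℤ :=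
  if h : p ∈ (arcShape O C).cells then
    M ⟨O.nthVal p.1, Finset.nthVal_lt (mem_arcShape.1 h).1⟩
      ⟨C.nthVal p.2, Finset.nthVal_lt (mem_arcShape.1 h).2.1⟩
  else 0

variable (O C) in
def arcMatrix (f : ℕ × ℕ → ℤ) : Matrix (Fin n) (Fin n) ℤ :=
  Matrix.of fun i j => if i ∈ O ∧ j ∈ C then f (O.rankOf i, C.rankOf j) else 0

theorem arcFilling_rankOf (M : Matrix (Fin n) (Fin n) ℤ) {o c : Fin n} (ho : o ∈ O) (hc : c ∈ C)
    (hoc : o < c) : arcFilling O C M (O.rankOf o, C.rankOf c) = M o c := by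
  rw [arcFilling, dif_pos ((rankOf_mem_arcShape_iff ho hc).2 hoc)]
  congr 1 <;> exact Fin.ext (Finset.nthVal_rankOf ‹_›)

theorem arcFilling_of_notMem (M : Matrix (Fin n) (Fin n) ℤ) {p : ℕ × ℕ}
    (hp : p ∉ (arcShape O C).cells) : arcFilling O C M p = 0 :=
  dif_neg hp

theorem exists_of_arcFilling_ne_zero {M : Matrix (Fin n) (Fin n) ℤ} {p : ℕ × ℕ}
    (h : arcFilling O C M p ≠ 0) :
    ∃ o ∈ O, ∃ c ∈ C, o < c ∧ p = (O.rankOf o, C.rankOf c) ∧ M o c ≠ 0 := by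
  have hp : p ∈ (arcShape O C).cells := by
    by_contra hp
    exact h (arcFilling_of_notMem M hp)
  obtain ⟨o, ho, c, hc, hoc, rfl⟩ := exists_of_mem_arcShape hp
  exact ⟨o, ho, c, hc, hoc, rfl, arcFilling_rankOf M ho hc hoc ▸ h⟩

theorem arcFilling_eq {M : Matrix (Fin n) (Fin n) ℤ} {f : ℕ × ℕ → ℤ}
    (hf : ∀ p, f p ≠ 0 → p ∈ (arcShape O C).cells)
    (hM : ∀ o ∈ O, ∀ c ∈ C, o < c → M o c = f (O.rankOf o, C.rankOf c)) :
    arcFilling O C M = f := by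
  funext p
  by_cases hp : p ∈ (arcShape O C).cells
  · obtain ⟨o, ho, c, hc, hoc, rfl⟩ := exists_of_mem_arcShape hp
    rw [arcFilling_rankOf M ho hc hoc, hM o ho c hc hoc]
  · rw [arcFilling_of_notMem M hp]
    by_contra h
    exact hp (hf p (Ne.symm h))

theorem arcMatrix_apply_of_mem (f : ℕ × ℕ → ℤ) {o c : Fin n} (ho : o ∈ O) (hc : c ∈ C) :
    arcMatrix O C f o c = f (O.rankOf o, C.rankOf c) :=
  if_pos ⟨ho, hc⟩

theorem arcMatrix_ne_zero {f : ℕ × ℕ → ℤ} (hf : ∀ p, f p ≠ 0 → p ∈ (arcShape O C).cells)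
    {i j : Fin n} (h : arcMatrix O C f i j ≠ 0) : i ∈ O ∧ j ∈ C ∧ i < j := by
  by_cases hij : i ∈ O ∧ j ∈ C
  · rw [arcMatrix_apply_of_mem f hij.1 hij.2] at h
    exact ⟨hij.1, hij.2, (rankOf_mem_arcShape_iff hij.1 hij.2).1 (hf _ h)⟩
  · exact absurd (if_neg hij) h

theorem arcMatrix_arcFilling {M : Matrix (Fin n) (Fin n) ℤ}
    (hM : ∀ i j, i < j → M i j ≠ 0 → i ∈ O ∧ j ∈ C) (i j : Fin n) :
    arcMatrix O C (arcFilling O C M) i j = if i < j then M i j else 0 := by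
  by_cases hij : i ∈ O ∧ j ∈ C
  · rw [arcMatrix_apply_of_mem _ hij.1 hij.2]
    split_ifs with hlt
    · exact arcFilling_rankOf M hij.1 hij.2 hlt
    · exact arcFilling_of_notMem M (mt (rankOf_mem_arcShape_iff hij.1 hij.2).1 hlt)
  · rw [arcMatrix, of_apply, if_neg hij]
    split_ifs with hlt
    · by_contra h
      exact hij (hM i j hlt (Ne.symm h))
    · rfl

variable {f : ℕ × ℕ → ℤ} (hf : NEIsSignedTransversal (arcShape O C) f)
include hf

theorem arcMatrix_eq_zero_or_one_or_neg_one (i j : Fin n) :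
    arcMatrix O C f i j = 0 ∨ arcMatrix O C f i j = 1 ∨ arcMatrix O C f i j = -1 := by
  rw [arcMatrix, of_apply]
  split_ifs
  · exact hf.1.2.1 _
  · exact Or.inl rfl

theorem arcMatrix_col_eq {o c c' : Fin n} (h : arcMatrix O C f o c ≠ 0)
    (h' : arcMatrix O C f o c' ≠ 0) : c = c' := by
  obtain ⟨ho, hc, -⟩ := arcMatrix_ne_zero hf.1.1 h
  obtain ⟨-, hc', -⟩ := arcMatrix_ne_zero hf.1.1 h'
  rw [arcMatrix_apply_of_mem f ho hc] at h
  rw [arcMatrix_apply_of_mem f ho hc'] at h'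
  exact (Finset.rankOf_inj hc hc').1 (hf.1.2.2.1 _ h h')

theorem arcMatrix_row_eq {o o' c : Fin n} (h : arcMatrix O C f o c ≠ 0)
    (h' : arcMatrix O C f o' c ≠ 0) : o = o' := by
  obtain ⟨ho, hc, -⟩ := arcMatrix_ne_zero hf.1.1 h
  obtain ⟨ho', -, -⟩ := arcMatrix_ne_zero hf.1.1 h'
  rw [arcMatrix_apply_of_mem f ho hc] at h
  rw [arcMatrix_apply_of_mem f ho' hc] at h'
  exact (Finset.rankOf_inj ho ho').1 (hf.1.2.2.2 _ h h')

theorem exists_arcMatrix_row_ne_zero {o c : Fin n} (ho : o ∈ O) (hc : c ∈ C) (hoc : o < c) :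
    ∃ c', arcMatrix O C f o c' ≠ 0 := by
  obtain ⟨s, hs⟩ := hf.2.1 _ ⟨_, (rankOf_mem_arcShape_iff ho hc).2 hoc⟩
  obtain ⟨_, _, c', hc', _, hp⟩ := exists_of_mem_arcShape (hf.1.1 _ hs)
  obtain ⟨-, rfl⟩ := Prod.mk_inj.1 hp
  exact ⟨c', arcMatrix_apply_of_mem f ho hc' ▸ hs⟩

theorem exists_arcMatrix_col_ne_zero {o c : Fin n} (ho : o ∈ O) (hc : c ∈ C) (hoc : o < c) :
    ∃ o', arcMatrix O C f o' c ≠ 0 := by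
  obtain ⟨s, hs⟩ := hf.2.2 _ ⟨_, (rankOf_mem_arcShape_iff ho hc).2 hoc⟩
  obtain ⟨o', ho', _, _, _, hp⟩ := exists_of_mem_arcShape (hf.1.1 _ hs)
  obtain ⟨rfl, -⟩ := Prod.mk_inj.1 hp
  exact ⟨o', arcMatrix_apply_of_mem f ho' hc ▸ hs⟩

end ArcFilling

theorem containsPatternAboveDiag_of_neContains_arcFilling {n k : ℕ} {O C : Finset (Fin n)}
    {M : Matrix (Fin n) (Fin n) ℤ}
    {σ : Matrix (Fin k) (Fin k) ℤ} (h : NEContains (arcShape O C) (arcFilling O C M) σ) :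
    ContainsPatternAboveDiag M σ := by
  obtain ⟨ρ, γ, hρ, hγ, hcells, hval⟩ := h
  choose r hrO c hcC hrc hrρ using fun a => exists_of_mem_arcShape (hcells a a)
  obtain rfl : ρ = fun a => O.rankOf (r a) := funext fun a => (Prod.mk_inj.1 (hrρ a)).1
  obtain rfl : γ = fun b => C.rankOf (c b) := funext fun b => (Prod.mk_inj.1 (hrρ b)).2
  refine ⟨r, c, fun a a' h => ?_, fun b b' h => ?_, fun a b => ?_, fun a b => ?_⟩
  · exact (Finset.rankOf_lt_rankOf_iff (hrO a) (hrO a')).1 (hρ h)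
  · exact (Finset.rankOf_lt_rankOf_iff (hcC b) (hcC b')).1 (hγ h)
  · exact (rankOf_mem_arcShape_iff (hrO a) (hcC b)).1 (hcells a b)
  · rw [← hval a b, arcFilling_rankOf M (hrO a) (hcC b)
      ((rankOf_mem_arcShape_iff (hrO a) (hcC b)).1 (hcells a b))]

theorem neContains_arcFilling_of_containsPatternAboveDiag {n k : ℕ} {O C : Finset (Fin n)}
    {M : Matrix (Fin n) (Fin n) ℤ} {σ : Matrix (Fin k) (Fin k) ℤ}
    (hM : ∀ i j, i < j → M i j ≠ 0 → i ∈ O ∧ j ∈ C) (hσ : IsSignedPermMatrix σ)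
    (h : ContainsPatternAboveDiag M σ) : NEContains (arcShape O C) (arcFilling O C M) σ := by
  obtain ⟨r, c, hr, hc, hrc, hval⟩ := h
  have hrO : ∀ a, r a ∈ O := fun a => by
    obtain ⟨b, hb, -⟩ := hσ.2.1 a
    exact (hM _ _ (hrc a b) (hval a b ▸ hb)).1
  have hcC : ∀ b, c b ∈ C := fun b => by
    obtain ⟨a, ha, -⟩ := hσ.2.2 b
    exact (hM _ _ (hrc a b) (hval a b ▸ ha)).2
  refine ⟨fun a => O.rankOf (r a), fun b => C.rankOf (c b), fun a a' h => ?_, fun b b' h => ?_,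
    fun a b => (rankOf_mem_arcShape_iff (hrO a) (hcC b)).2 (hrc a b), fun a b => ?_⟩
  · exact (Finset.rankOf_lt_rankOf_iff (hrO a) (hrO a')).2 (hr h)
  · exact (Finset.rankOf_lt_rankOf_iff (hcC b) (hcC b')).2 (hc h)
  · rw [arcFilling_rankOf M (hrO a) (hcC b) (hrc a b), hval]

namespace Matrix

variable {n : ℕ} (M : Matrix (Fin n) (Fin n) ℤ)

def fixedPoints : Finset (Fin n) := {i : Fin n | M i i ≠ 0}

def posFixedPoints : Finset (Fin n) := {i : Fin n | M i i = 1}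

open scoped Classical in
/-- In a signed involution, the smaller element of each 2-cycle. -/
noncomputable def openers : Finset (Fin n) := {i : Fin n | ∃ j : Fin n, i < j ∧ M i j ≠ 0}

noncomputable def closers : Finset (Fin n) := (M.fixedPoints ∪ M.openers)ᶜ

noncomputable def involutionProfile : Finset (Fin n) × Finset (Fin n) × Finset (Fin n) :=
  (M.fixedPoints, M.posFixedPoints, M.openers)

variable {M}

@[simp] theorem mem_fixedPoints {i : Fin n} : i ∈ M.fixedPoints ↔ M i i ≠ 0 := by
  simp [fixedPoints]

@[simp] theorem mem_posFixedPoints {i : Fin n} : i ∈ M.posFixedPoints ↔ M i i = 1 := by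
  simp [posFixedPoints]

@[simp] theorem mem_openers {i : Fin n} : i ∈ M.openers ↔ ∃ j, i < j ∧ M i j ≠ 0 := by
  simp [openers]

theorem mem_closers {i : Fin n} : i ∈ M.closers ↔ i ∉ M.fixedPoints ∧ i ∉ M.openers := by
  simp [closers]

theorem posFixedPoints_subset_fixedPoints : M.posFixedPoints ⊆ M.fixedPoints := fun i hi => by
  simp_all

theorem disjoint_openers_fixedPoints (hM : IsSignedPermMatrix M) :
    Disjoint M.openers M.fixedPoints := by
  refine Finset.disjoint_left.2 fun i hi hii => ?_
  obtain ⟨j, hij, hne⟩ := mem_openers.1 hi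
  exact hij.ne (hM.col_eq (mem_fixedPoints.1 hii) hne)

variable (hM : IsSignedPermMatrix M) (hsym : M.IsSymm)
include hM hsym

theorem mem_openers_and_mem_closers {i j : Fin n} (hij : i < j) (h : M i j ≠ 0) :
    i ∈ M.openers ∧ j ∈ M.closers := by
  have hji : M j i ≠ 0 := hsym.apply i j ▸ h
  refine ⟨mem_openers.2 ⟨j, hij, h⟩, mem_closers.2 ⟨fun hj => ?_, fun hj => ?_⟩⟩
  · exact hij.ne (hM.col_eq hji (mem_fixedPoints.1 hj))
  · obtain ⟨l, hjl, hl⟩ := mem_openers.1 hj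
    exact (hij.trans hjl).ne (hM.col_eq hji hl)

theorem exists_lt_of_mem_closers {c : Fin n} (hc : c ∈ M.closers) : ∃ o, o < c ∧ M o c ≠ 0 := by
  obtain ⟨hcF, hcO⟩ := mem_closers.1 hc
  obtain ⟨o, ho, -⟩ := hM.2.1 c
  rcases lt_trichotomy o c with hoc | rfl | hco
  · exact ⟨o, hoc, hsym.apply c o ▸ ho⟩
  · exact absurd (mem_fixedPoints.2 ho) hcF
  · exact absurd (mem_openers.2 ⟨o, hco, ho⟩) hcO

theorem containsPattern_primePat_iff_neContains {k : ℕ} {σ : Matrix (Fin k) (Fin k) ℤ}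
    (hσ : IsSignedPermMatrix σ) :
    ContainsPattern M (primePat σ) ↔
      NEContains (arcShape M.openers M.closers) (arcFilling M.openers M.closers M) σ := by
  rw [containsPattern_primePat_iff hM hsym hσ]
  exact ⟨neContains_arcFilling_of_containsPatternAboveDiag
    (fun _ _ hij h => mem_openers_and_mem_closers hM hsym hij h) hσ,
    containsPatternAboveDiag_of_neContains_arcFilling⟩

theorem isSignedTransversal_arcFilling :
    NEIsSignedTransversal (arcShape M.openers M.closers) (arcFilling M.openers M.closers M) := by
  refine ⟨⟨fun p h => ?_, fun p => ?_, fun i x hx y hy => ?_, fun j x hx y hy => ?_⟩,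
    fun i ⟨j, hij⟩ => ?_, fun j ⟨i, hij⟩ => ?_⟩
  · by_contra hp
    exact h (arcFilling_of_notMem M hp)
  · unfold arcFilling
    split_ifs
    exacts [hM.1 _ _, Or.inl rfl]
  · obtain ⟨o, ho, c, hc, -, hp, hne⟩ := exists_of_arcFilling_ne_zero hx
    obtain ⟨o', ho', c', hc', -, hp', hne'⟩ := exists_of_arcFilling_ne_zero hy
    obtain ⟨hi, rfl⟩ := Prod.mk_inj.1 hp
    obtain ⟨hi', rfl⟩ := Prod.mk_inj.1 hp'
    obtain rfl := (Finset.rankOf_inj ho ho').1 (hi.symm.trans hi')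
    rw [hM.col_eq hne hne']
  · obtain ⟨o, ho, c, hc, -, hp, hne⟩ := exists_of_arcFilling_ne_zero hx
    obtain ⟨o', ho', c', hc', -, hp', hne'⟩ := exists_of_arcFilling_ne_zero hy
    obtain ⟨rfl, hj⟩ := Prod.mk_inj.1 hp
    obtain ⟨rfl, hj'⟩ := Prod.mk_inj.1 hp'
    obtain rfl := (Finset.rankOf_inj hc hc').1 (hj.symm.trans hj')
    rw [hM.row_eq hne hne']
  · obtain ⟨o, ho, _, _, _, hp⟩ := exists_of_mem_arcShape hij
    obtain ⟨c, hoc, hne⟩ := mem_openers.1 ho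
    have hc := (mem_openers_and_mem_closers hM hsym hoc hne).2
    refine ⟨M.closers.rankOf c, ?_⟩
    rwa [(Prod.mk_inj.1 hp).1, arcFilling_rankOf M ho hc hoc]
  · obtain ⟨_, _, c, hc, _, hp⟩ := exists_of_mem_arcShape hij
    obtain ⟨o, hoc, hne⟩ := exists_lt_of_mem_closers hM hsym hc
    have ho := (mem_openers_and_mem_closers hM hsym hoc hne).1
    refine ⟨M.openers.rankOf o, ?_⟩
    rwa [(Prod.mk_inj.1 hp).2, arcFilling_rankOf M ho hc hoc]

end Matrix

section InvolutionOfFilling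

variable {n : ℕ}

def signDiag (F P : Finset (Fin n)) (i : Fin n) : ℤ :=
  if i ∈ P then 1 else if i ∈ F then -1 else 0

/-- Inverse of `arcFilling`: the signed involution with fixed points `F`, positive exactly on `P`,
whose 2-cycles `o ↔ c` (`o ∈ O`, `c ∉ F ∪ O`, `o < c`) carry the entries of `f`. -/
def involutionOfFilling (F P O : Finset (Fin n)) (f : ℕ × ℕ → ℤ) : Matrix (Fin n) (Fin n) ℤ :=
  diagonal (signDiag F P) + arcMatrix O (F ∪ O)ᶜ f + (arcMatrix O (F ∪ O)ᶜ f)ᵀ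

theorem signDiag_fixedPoints {M : Matrix (Fin n) (Fin n) ℤ} (hM : IsSignedPermMatrix M)
    (i : Fin n) : signDiag M.fixedPoints M.posFixedPoints i = M i i := by
  rcases hM.1 i i with h | h | h <;> simp [signDiag, h]

theorem involutionOfFilling_arcFilling {M : Matrix (Fin n) (Fin n) ℤ}
    (hM : IsSignedPermMatrix M) (hsym : M.IsSymm) :
    involutionOfFilling M.fixedPoints M.posFixedPoints M.openers
      (arcFilling M.openers M.closers M) = M := by
  have hC : (M.fixedPoints ∪ M.openers)ᶜ = M.closers := rfl
  have hup := arcMatrix_arcFilling (M := M)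
    fun _ _ hij h => M.mem_openers_and_mem_closers hM hsym hij h
  ext i j
  simp only [involutionOfFilling, hC, Matrix.add_apply, transpose_apply, diagonal_apply, hup]
  rcases lt_trichotomy i j with h | rfl | h
  · simp [h, h.ne, h.not_gt]
  · simp [signDiag_fixedPoints hM]
  · simp [h, h.ne', h.not_gt, hsym.apply]

variable {F P O : Finset (Fin n)} {f : ℕ × ℕ → ℤ}

theorem involutionOfFilling_isSymm : (involutionOfFilling F P O f).IsSymm := by
  rw [involutionOfFilling, add_assoc]
  exact (isSymm_diagonal _).add (isSymm_add_transpose_self _)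

theorem involutionOfFilling_apply_of_ne {i j : Fin n} (hij : i ≠ j) :
    involutionOfFilling F P O f i j = arcMatrix O (F ∪ O)ᶜ f i j + arcMatrix O (F ∪ O)ᶜ f j i := by
  simp [involutionOfFilling, diagonal_apply_ne _ hij]

theorem arcMatrix_ne_zero_or_of_involutionOfFilling_ne_zero {i j : Fin n} (hij : i ≠ j)
    (h : involutionOfFilling F P O f i j ≠ 0) :
    arcMatrix O (F ∪ O)ᶜ f i j ≠ 0 ∨ arcMatrix O (F ∪ O)ᶜ f j i ≠ 0 := by
  contrapose! h
  rw [involutionOfFilling_apply_of_ne hij, h.1, h.2, add_zero]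

variable (hf : ∀ p, f p ≠ 0 → p ∈ (arcShape O (F ∪ O)ᶜ).cells)
include hf

theorem involutionOfFilling_apply_self (i : Fin n) :
    involutionOfFilling F P O f i i = signDiag F P i := by
  have hii : arcMatrix O (F ∪ O)ᶜ f i i = 0 := by
    by_contra h
    exact (arcMatrix_ne_zero hf h).2.2.false
  simp only [involutionOfFilling, Matrix.add_apply, transpose_apply, diagonal_apply_eq, hii,
    add_zero]

theorem involutionOfFilling_apply_of_lt {i j : Fin n} (hij : i < j) :
    involutionOfFilling F P O f i j = arcMatrix O (F ∪ O)ᶜ f i j := by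
  have hji : arcMatrix O (F ∪ O)ᶜ f j i = 0 := by
    by_contra h
    exact (arcMatrix_ne_zero hf h).2.2.not_gt hij
  rw [involutionOfFilling_apply_of_ne hij.ne, hji, add_zero]

end InvolutionOfFilling

section InvolutionOfTransversal

variable {n : ℕ} {F P O : Finset (Fin n)} {f : ℕ × ℕ → ℤ}

theorem signDiag_ne_zero_iff (hPF : P ⊆ F) {i : Fin n} : signDiag F P i ≠ 0 ↔ i ∈ F := by
  by_cases hP : i ∈ P
  · simp [signDiag, hP, hPF hP]
  · by_cases hF : i ∈ F <;> simp [signDiag, hP, hF]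

theorem signDiag_eq_one_iff {i : Fin n} : signDiag F P i = 1 ↔ i ∈ P := by
  by_cases hP : i ∈ P
  · simp [signDiag, hP]
  · by_cases hF : i ∈ F <;> simp [signDiag, hP, hF]

variable (hPF : P ⊆ F) (hOF : Disjoint O F) (hO : ∀ o ∈ O, ∃ c ∈ (F ∪ O)ᶜ, o < c)
  (hC : ∀ c ∈ (F ∪ O)ᶜ, ∃ o ∈ O, o < c) (hf : NEIsSignedTransversal (arcShape O (F ∪ O)ᶜ) f)

include hO hf in
theorem exists_arcMatrix_ne_zero_of_mem_left {o : Fin n} (ho : o ∈ O) :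
    ∃ c, o < c ∧ arcMatrix O (F ∪ O)ᶜ f o c ≠ 0 := by
  obtain ⟨c, hc, hoc⟩ := hO o ho
  obtain ⟨c', hc'⟩ := exists_arcMatrix_row_ne_zero hf ho hc hoc
  exact ⟨c', (arcMatrix_ne_zero hf.1.1 hc').2.2, hc'⟩

include hC hf in
theorem exists_arcMatrix_ne_zero_of_mem_right {c : Fin n} (hc : c ∈ (F ∪ O)ᶜ) :
    ∃ o, o < c ∧ arcMatrix O (F ∪ O)ᶜ f o c ≠ 0 := by
  obtain ⟨o, ho, hoc⟩ := hC c hc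
  obtain ⟨o', ho'⟩ := exists_arcMatrix_col_ne_zero hf ho hc hoc
  exact ⟨o', (arcMatrix_ne_zero hf.1.1 ho').2.2, ho'⟩

include hPF hOF hO hC hf in
theorem existsUnique_involutionOfFilling_ne_zero (i : Fin n) :
    ∃! j, involutionOfFilling F P O f i j ≠ 0 := by
  have hoff : ∀ j, j ≠ i → involutionOfFilling F P O f i j ≠ 0 →
      arcMatrix O (F ∪ O)ᶜ f i j ≠ 0 ∨ arcMatrix O (F ∪ O)ᶜ f j i ≠ 0 :=
    fun j hji => arcMatrix_ne_zero_or_of_involutionOfFilling_ne_zero hji.symm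
  have hdiag : i ∉ F → involutionOfFilling F P O f i i = 0 := fun hi => by
    rw [involutionOfFilling_apply_self hf.1.1]
    exact not_not.1 (mt (signDiag_ne_zero_iff hPF).1 hi)
  by_cases hiF : i ∈ F
  · refine ⟨i, ?_, fun j hj => by_contra fun hji => ?_⟩
    · beta_reduce
      rwa [involutionOfFilling_apply_self hf.1.1, signDiag_ne_zero_iff hPF]
    · rcases hoff j hji hj with h | h
      · exact Finset.disjoint_left.1 hOF (arcMatrix_ne_zero hf.1.1 h).1 hiF
      · simpa [hiF] using (arcMatrix_ne_zero hf.1.1 h).2.1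
  by_cases hiO : i ∈ O
  · obtain ⟨c, hic, hc⟩ := exists_arcMatrix_ne_zero_of_mem_left hO hf hiO
    refine ⟨c, by beta_reduce; rwa [involutionOfFilling_apply_of_lt hf.1.1 hic], fun j hj => ?_⟩
    have hji : j ≠ i := by
      rintro rfl
      exact hj (hdiag hiF)
    rcases hoff j hji hj with h | h
    · exact arcMatrix_col_eq hf h hc
    · simpa [hiO] using (arcMatrix_ne_zero hf.1.1 h).2.1
  · have hiC : i ∈ (F ∪ O)ᶜ := by simp [hiF, hiO]
    obtain ⟨o, hoi, ho⟩ := exists_arcMatrix_ne_zero_of_mem_right hC hf hiC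
    refine ⟨o, ?_, fun j hj => ?_⟩
    · beta_reduce
      rwa [← involutionOfFilling_isSymm.apply, involutionOfFilling_apply_of_lt hf.1.1 hoi]
    have hji : j ≠ i := by
      rintro rfl
      exact hj (hdiag hiF)
    rcases hoff j hji hj with h | h
    · exact absurd (arcMatrix_ne_zero hf.1.1 h).1 hiO
    · exact arcMatrix_row_eq hf h ho

include hPF hOF hO hC hf in
theorem isSignedPermMatrix_involutionOfFilling :
    IsSignedPermMatrix (involutionOfFilling F P O f) := by
  refine .of_isSymm (fun i j => ?_) (existsUnique_involutionOfFilling_ne_zero hPF hOF hO hC hf)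
    involutionOfFilling_isSymm
  rcases lt_trichotomy i j with h | rfl | h
  · rw [involutionOfFilling_apply_of_lt hf.1.1 h]
    exact arcMatrix_eq_zero_or_one_or_neg_one hf i j
  · rw [involutionOfFilling_apply_self hf.1.1, signDiag]
    split_ifs <;> simp
  · rw [← involutionOfFilling_isSymm.apply, involutionOfFilling_apply_of_lt hf.1.1 h]
    exact arcMatrix_eq_zero_or_one_or_neg_one hf j i

include hPF hO hf in
theorem involutionProfile_involutionOfFilling :
    (involutionOfFilling F P O f).involutionProfile = (F, P, O) := by
  simp only [involutionProfile, Prod.mk.injEq, Finset.ext_iff, mem_fixedPoints,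
    mem_posFixedPoints, mem_openers, involutionOfFilling_apply_self hf.1.1,
    signDiag_ne_zero_iff hPF, signDiag_eq_one_iff, implies_true, true_and]
  refine fun i => ⟨fun ⟨j, hij, h⟩ => ?_, fun hi => ?_⟩
  · rw [involutionOfFilling_apply_of_lt hf.1.1 hij] at h
    exact (arcMatrix_ne_zero hf.1.1 h).1
  · obtain ⟨c, hic, hc⟩ := exists_arcMatrix_ne_zero_of_mem_left hO hf hi
    exact ⟨c, hic, by rwa [involutionOfFilling_apply_of_lt hf.1.1 hic]⟩

include hf in
theorem arcFilling_involutionOfFilling :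
    arcFilling O (F ∪ O)ᶜ (involutionOfFilling F P O f) = f :=
  arcFilling_eq hf.1.1 fun o ho c hc hoc => by
    rw [involutionOfFilling_apply_of_lt hf.1.1 hoc, arcMatrix_apply_of_mem f ho hc]

end InvolutionOfTransversal

theorem Matrix.involutionProfile_eq_iff {n : ℕ} {M : Matrix (Fin n) (Fin n) ℤ}
    {F P O : Finset (Fin n)} :
    M.involutionProfile = (F, P, O) ↔
      M.fixedPoints = F ∧ M.posFixedPoints = P ∧ M.openers = O := by
  simp only [involutionProfile, Prod.mk.injEq]

theorem Matrix.involutionProfile_admissible {n : ℕ} {M : Matrix (Fin n) (Fin n) ℤ}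
    (hM : IsSignedPermMatrix M) (hsym : M.IsSymm) {F P O : Finset (Fin n)}
    (h : M.involutionProfile = (F, P, O)) :
    P ⊆ F ∧ Disjoint O F ∧ (∀ o ∈ O, ∃ c ∈ (F ∪ O)ᶜ, o < c) ∧
      ∀ c ∈ (F ∪ O)ᶜ, ∃ o ∈ O, o < c := by
  obtain ⟨rfl, rfl, rfl⟩ := involutionProfile_eq_iff.1 h
  refine ⟨M.posFixedPoints_subset_fixedPoints, M.disjoint_openers_fixedPoints hM,
    fun o ho => ?_, fun c hc => ?_⟩
  · obtain ⟨c, hoc, hne⟩ := mem_openers.1 ho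
    exact ⟨c, (M.mem_openers_and_mem_closers hM hsym hoc hne).2, hoc⟩
  · obtain ⟨o, hoc, hne⟩ := M.exists_lt_of_mem_closers hM hsym hc
    exact ⟨o, (M.mem_openers_and_mem_closers hM hsym hoc hne).1, hoc⟩

/-- Within one profile, `arcFilling` is a bijection from the `σ'`-avoiding signed involutions
onto the `σ`-avoiding signed transversals of the arc shape. -/
theorem ncard_avoiders_inter_profile_eq {n k : ℕ} {σ : Matrix (Fin k) (Fin k) ℤ}
    (hσ : IsSignedPermMatrix σ) {F P O : Finset (Fin n)} {M₀ : Matrix (Fin n) (Fin n) ℤ}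
    (hM₀ : IsSignedPermMatrix M₀) (hsym₀ : M₀.IsSymm) (hprof₀ : M₀.involutionProfile = (F, P, O)) :
    ({M : Matrix (Fin n) (Fin n) ℤ | IsSignedPermMatrix M ∧ M.IsSymm ∧
        ¬ ContainsPattern M (primePat σ)} ∩ involutionProfile ⁻¹' {(F, P, O)}).ncard =
      {f : ℕ × ℕ → ℤ | NEIsSignedTransversal (arcShape O (F ∪ O)ᶜ) f ∧
        ¬ NEContains (arcShape O (F ∪ O)ᶜ) f σ}.ncard := by
  have key : ∀ M : Matrix (Fin n) (Fin n) ℤ, IsSignedPermMatrix M → M.IsSymm →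
      M.involutionProfile = (F, P, O) →
      NEIsSignedTransversal (arcShape O (F ∪ O)ᶜ) (arcFilling O (F ∪ O)ᶜ M) ∧
      (ContainsPattern M (primePat σ) ↔
        NEContains (arcShape O (F ∪ O)ᶜ) (arcFilling O (F ∪ O)ᶜ M) σ) ∧
      involutionOfFilling F P O (arcFilling O (F ∪ O)ᶜ M) = M := by
    intro M hM hsym hprof
    obtain ⟨rfl, rfl, rfl⟩ := Matrix.involutionProfile_eq_iff.1 hprof
    exact ⟨M.isSignedTransversal_arcFilling hM hsym,
      M.containsPattern_primePat_iff_neContains hM hsym hσ, involutionOfFilling_arcFilling hM hsym⟩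
  have hinj : Set.InjOn (arcFilling O (F ∪ O)ᶜ) ({M : Matrix (Fin n) (Fin n) ℤ |
      IsSignedPermMatrix M ∧ M.IsSymm ∧ ¬ ContainsPattern M (primePat σ)} ∩
        involutionProfile ⁻¹' {(F, P, O)}) := by
    rintro M ⟨⟨hM, hsym, -⟩, hprof⟩ M' ⟨⟨hM', hsym', -⟩, hprof'⟩ h
    rw [← (key M hM hsym hprof).2.2, ← (key M' hM' hsym' hprof').2.2, h]
  rw [← hinj.ncard_image]
  congr 1
  ext f
  constructor
  · rintro ⟨M, ⟨⟨hM, hsym, havoid⟩, hprof⟩, rfl⟩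
    exact ⟨(key M hM hsym hprof).1, (key M hM hsym hprof).2.1.not.1 havoid⟩
  · rintro ⟨hf, havoid⟩
    obtain ⟨hPF, hOF, hO, hC⟩ := Matrix.involutionProfile_admissible hM₀ hsym₀ hprof₀
    have hA := isSignedPermMatrix_involutionOfFilling hPF hOF hO hC hf
    have hprofA := involutionProfile_involutionOfFilling hPF hO hf
    have hfill := arcFilling_involutionOfFilling (P := P) hf
    refine ⟨involutionOfFilling F P O f, ⟨⟨hA, involutionOfFilling_isSymm, ?_⟩, hprofA⟩, hfill⟩
    rwa [(key _ hA involutionOfFilling_isSymm hprofA).2.1, hfill]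

theorem Matrix.coe_fixedPoints {n : ℕ} (M : Matrix (Fin n) (Fin n) ℤ) :
    (M.fixedPoints : Set (Fin n)) = {i | M i i ≠ 0} := by
  ext; simp

theorem ncard_avoiders_inter_profile_eq_of_neShapeWilfEquiv {n k : ℕ}
    {σ τ : Matrix (Fin k) (Fin k) ℤ} (hσ : IsSignedPermMatrix σ) (hτ : IsSignedPermMatrix τ)
    (heq : NEShapeWilfEquiv σ τ) (x : Finset (Fin n) × Finset (Fin n) × Finset (Fin n)) :
    ({M : Matrix (Fin n) (Fin n) ℤ | IsSignedPermMatrix M ∧ M.IsSymm ∧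
        ¬ ContainsPattern M (primePat σ)} ∩ involutionProfile ⁻¹' {x}).ncard =
      ({M : Matrix (Fin n) (Fin n) ℤ | IsSignedPermMatrix M ∧ M.IsSymm ∧
        ¬ ContainsPattern M (primePat τ)} ∩ involutionProfile ⁻¹' {x}).ncard := by
  obtain ⟨F, P, O⟩ := x
  by_cases h : ∃ M₀ : Matrix (Fin n) (Fin n) ℤ,
      IsSignedPermMatrix M₀ ∧ M₀.IsSymm ∧ M₀.involutionProfile = (F, P, O)
  · obtain ⟨M₀, hM₀, hsym₀, hprof₀⟩ := h
    rw [ncard_avoiders_inter_profile_eq hσ hM₀ hsym₀ hprof₀,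
      ncard_avoiders_inter_profile_eq hτ hM₀ hsym₀ hprof₀]
    exact heq _
  · have hempty : ∀ υ : Matrix (Fin k) (Fin k) ℤ,
        {M : Matrix (Fin n) (Fin n) ℤ | IsSignedPermMatrix M ∧ M.IsSymm ∧
          ¬ ContainsPattern M (primePat υ)} ∩ involutionProfile ⁻¹' {(F, P, O)} = ∅ :=
      fun υ => Set.eq_empty_of_forall_notMem fun M ⟨⟨hM, hsym, _⟩, hprof⟩ =>
        h ⟨M, hM, hsym, hprof⟩
    rw [hempty, hempty]

/-- if σ and τ are NE-shape Wilf equivalent signed permutation matrices,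
then for every n ≥ 1 and every set F of positions, the σ'-avoiding signed involutions
in SI_n with fixed-point set F are equinumerous with the τ'-avoiding ones;
in particular |SI_n(σ')| = |SI_n(τ')|. -/
theorem stmt1 {k : ℕ} (σ τ : Matrix (Fin k) (Fin k) ℤ)
    (hσ : IsSignedPermMatrix σ) (hτ : IsSignedPermMatrix τ)
    (heq : NEShapeWilfEquiv σ τ) :
    ∀ n : ℕ, 1 ≤ n →
      (∀ F : Set (Fin n),
        {M : Matrix (Fin n) (Fin n) ℤ | IsSignedPermMatrix M ∧ M.IsSymm ∧
          ¬ ContainsPattern M (primePat σ) ∧ {i | M i i ≠ 0} = F}.ncard =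
        {M : Matrix (Fin n) (Fin n) ℤ | IsSignedPermMatrix M ∧ M.IsSymm ∧
          ¬ ContainsPattern M (primePat τ) ∧ {i | M i i ≠ 0} = F}.ncard) ∧
      SIAvoidCount n (primePat σ) = SIAvoidCount n (primePat τ) := by
  intro n _
  have hcount := Set.ncard_inter_preimage_eq_of_ncard_fiber_eq
    ((setOf_isSignedPermMatrix_finite n).subset fun _ hM => hM.1)
    ((setOf_isSignedPermMatrix_finite n).subset fun _ hM => hM.1)
    involutionProfile (ncard_avoiders_inter_profile_eq_of_neShapeWilfEquiv hσ hτ heq)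
  refine ⟨fun F => ?_, by simpa [SIAvoidCount] using hcount Set.univ⟩
  convert hcount {x | (x.1 : Set (Fin n)) = F} using 2 <;>
    ext M <;> simp [involutionProfile, Matrix.coe_fixedPoints, and_assoc]
end

section
/- Let σ and τ be NE-shape Wilf equivalent signed permutation matrices of size k. Then for every n ≥ 1 and every subset F ⊆ {1,…,n}, the number of signed involutions π ∈ SI_n avoiding σ'' whose set of fixed points (positions i with |π_i| = i) equals F is the same as the number of signed involutions in SI_n avoiding τ'' with fixed-point set F. In particular, |SI_n(σ'')| = |SI_n(τ'')| for every n, i.e., σ'' and τ'' are I-Wilf equivalent. -/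
open Matrix

namespace Stmt2Aux

open Matrix

variable {n k : ℕ}

lemma row_eq {M : Matrix (Fin n) (Fin n) ℤ} (hM : IsSignedPermMatrix M) {i a b : Fin n}
    (ha : M i a ≠ 0) (hb : M i b ≠ 0) : a = b := by
  obtain ⟨j, -, hj⟩ := hM.2.1 i
  rw [hj a ha, hj b hb]

lemma col_eq {M : Matrix (Fin n) (Fin n) ℤ} (hM : IsSignedPermMatrix M) {j a b : Fin n}
    (ha : M a j ≠ 0) (hb : M b j ≠ 0) : a = b := by
  obtain ⟨i, -, hi⟩ := hM.2.2 j
  rw [hi a ha, hi b hb]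

lemma row_ex {M : Matrix (Fin k) (Fin k) ℤ} (hM : IsSignedPermMatrix M) (i : Fin k) :
    ∃ j, M i j ≠ 0 := (hM.2.1 i).exists

lemma col_ex {M : Matrix (Fin k) (Fin k) ℤ} (hM : IsSignedPermMatrix M) (j : Fin k) :
    ∃ i, M i j ≠ 0 := (hM.2.2 j).exists

lemma symm_apply {M : Matrix (Fin n) (Fin n) ℤ} (hs : M.IsSymm) (i j : Fin n) :
    M i j = M j i := by
  conv_lhs => rw [← hs]
  rfl

/-- The index equivalence used in `doublePrimePat`. -/
def E (k : ℕ) : (Fin k ⊕ (Fin 1 ⊕ Fin k)) ≃ Fin (k + (1 + k)) :=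
  (Equiv.sumCongr (Equiv.refl (Fin k)) finSumFinEquiv).trans finSumFinEquiv

lemma E_inl (a : Fin k) : (E k (Sum.inl a) : ℕ) = a := by
  simp [E]

lemma E_mid (z : Fin 1) : (E k (Sum.inr (Sum.inl z)) : ℕ) = k := by
  simp [E]

lemma E_inr (b : Fin k) : (E k (Sum.inr (Sum.inr b)) : ℕ) = k + (1 + b) := by
  simp [E]

/-- The block matrix underlying `doublePrimePat`. -/
def Bmat (σ : Matrix (Fin k) (Fin k) ℤ) :
    Matrix (Fin k ⊕ (Fin 1 ⊕ Fin k)) (Fin k ⊕ (Fin 1 ⊕ Fin k)) ℤ :=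
  Matrix.fromBlocks
      (0 : Matrix (Fin k) (Fin k) ℤ)
      (Matrix.of fun (i : Fin k) (j : Fin 1 ⊕ Fin k) =>
        Sum.elim (fun _ => (0 : ℤ)) (fun j' => σ i j') j)
      (Matrix.of fun (i : Fin 1 ⊕ Fin k) (j : Fin k) =>
        Sum.elim (fun _ => (0 : ℤ)) (fun i' => σ.transpose i' j) i)
      (Matrix.fromBlocks (1 : Matrix (Fin 1) (Fin 1) ℤ) 0 0 (0 : Matrix (Fin k) (Fin k) ℤ))

lemma dpp_E (σ : Matrix (Fin k) (Fin k) ℤ) (u v : Fin k ⊕ (Fin 1 ⊕ Fin k)) :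
    doublePrimePat σ (E k u) (E k v) = Bmat σ u v := by
  simp [doublePrimePat, Bmat, E, Matrix.reindex_apply]

/-- The "centered occurrence" condition equivalent to containing `σ''`. -/
def CenterCond (M : Matrix (Fin n) (Fin n) ℤ) (π : Matrix (Fin k) (Fin k) ℤ) : Prop :=
  ∃ x y : Fin n, x ≤ y ∧ M x y = 1 ∧ ∃ r c : Fin k → Fin n,
    StrictMono r ∧ StrictMono c ∧ (∀ a, r a < x) ∧ (∀ b, y < c b) ∧
    ∀ a b, M (r a) (c b) = π a b

theorem contains_dpp_iff {M : Matrix (Fin n) (Fin n) ℤ} {π : Matrix (Fin k) (Fin k) ℤ}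
    (hM : IsSignedPermMatrix M) (hs : M.IsSymm) (hπ : IsSignedPermMatrix π) :
    ContainsPattern M (doublePrimePat π) ↔ CenterCond M π := by
  constructor
  · rintro ⟨r, c, hr, hc, hval⟩
    have hval' : ∀ u v, M (r (E k u)) (c (E k v)) = Bmat π u v := by
      intro u v; rw [← dpp_E]; exact hval _ _
    set x := r (E k (Sum.inr (Sum.inl 0))) with hx
    set y := c (E k (Sum.inr (Sum.inl 0))) with hy
    have hxy : M x y = 1 := by
      have := hval' (Sum.inr (Sum.inl 0)) (Sum.inr (Sum.inl 0))
      simpa [Bmat, Matrix.one_apply] using this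
    have hEl : ∀ a : Fin k, E k (Sum.inl a) < E k (Sum.inr (Sum.inl (0 : Fin 1))) := by
      intro a; rw [Fin.lt_def, E_inl, E_mid]; exact a.2
    have hEr : ∀ b : Fin k, E k (Sum.inr (Sum.inl (0 : Fin 1))) < E k (Sum.inr (Sum.inr b)) := by
      intro b; rw [Fin.lt_def, E_mid, E_inr]; omega
    have hEll : ∀ a b : Fin k, a < b → E k (Sum.inl a) < E k (Sum.inl b) := by
      intro a b h; rw [Fin.lt_def, E_inl, E_inl]; exact h
    have hErr : ∀ a b : Fin k, a < b → E k (Sum.inr (Sum.inr a)) < E k (Sum.inr (Sum.inr b)) := by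
      intro a b h; rw [Fin.lt_def, E_inr, E_inr]; omega
    rcases le_or_gt x y with hle | hlt
    · refine ⟨x, y, hle, hxy, fun a => r (E k (Sum.inl a)), fun b => c (E k (Sum.inr (Sum.inr b))),
        fun a b h => hr (hEll a b h), fun a b h => hc (hErr a b h),
        fun a => hr (hEl a), fun b => hc (hEr b), fun a b => ?_⟩
      simpa [Bmat] using hval' (Sum.inl a) (Sum.inr (Sum.inr b))
    · have hyx : M y x = 1 := by rw [symm_apply hs]; exact hxy
      refine ⟨y, x, le_of_lt hlt, hyx, fun a => c (E k (Sum.inl a)), fun b => r (E k (Sum.inr (Sum.inr b))),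
        fun a b h => hc (hEll a b h), fun a b h => hr (hErr a b h),
        fun a => hc (hEl a), fun b => hr (hEr b), fun a b => ?_⟩
      rw [symm_apply hs]
      simpa [Bmat] using hval' (Sum.inr (Sum.inr b)) (Sum.inl a)
  · rintro ⟨x, y, hxy, hMxy, r, c, hr, hc, hrx, hyc, hval⟩
    have hrc : ∀ a b, r a < c b := fun a b => lt_of_lt_of_le (hrx a) (le_trans hxy (le_of_lt (hyc b)))
    set W : Fin k ⊕ (Fin 1 ⊕ Fin k) → Fin n := Sum.elim r (Sum.elim (fun _ => x) c) with hW
    set W' : Fin k ⊕ (Fin 1 ⊕ Fin k) → Fin n := Sum.elim r (Sum.elim (fun _ => y) c) with hW'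
    have keyW : ∀ u v, E k u < E k v → W u < W v := by
      rintro (a | z | b) (a' | z' | b') h <;>
        rw [Fin.lt_def] at h <;>
        simp only [E_inl, E_mid, E_inr] at h <;>
        simp only [hW, Sum.elim_inl, Sum.elim_inr]
      · exact hr (by omega)
      · exact hrx _
      · exact hrc _ _
      · omega
      · omega
      · exact lt_of_le_of_lt hxy (hyc _)
      · omega
      · omega
      · exact hc (by omega)
    have keyW' : ∀ u v, E k u < E k v → W' u < W' v := by
      rintro (a | z | b) (a' | z' | b') h <;>
        rw [Fin.lt_def] at h <;>
        simp only [E_inl, E_mid, E_inr] at h <;>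
        simp only [hW', Sum.elim_inl, Sum.elim_inr]
      · exact hr (by omega)
      · exact lt_of_lt_of_le (hrx _) hxy
      · exact hrc _ _
      · omega
      · omega
      · exact hyc _
      · omega
      · omega
      · exact hc (by omega)
    have keyV : ∀ u v, M (W u) (W' v) = Bmat π u v := by
      rintro (a | z | b) (a' | z' | b')
      · -- M (r a) (r a') = 0
        obtain ⟨j₀, hj₀⟩ := row_ex hπ a
        have h1 : M (r a) (c j₀) ≠ 0 := by rw [hval]; exact hj₀
        simp only [hW, hW', Sum.elim_inl, Bmat, Matrix.fromBlocks_apply₁₁, Matrix.zero_apply]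
        by_contra h
        exact absurd (row_eq hM h h1) (ne_of_lt (hrc a' j₀))
      · -- M (r a) y = 0
        obtain ⟨j₀, hj₀⟩ := row_ex hπ a
        have h1 : M (r a) (c j₀) ≠ 0 := by rw [hval]; exact hj₀
        simp only [hW, hW', Sum.elim_inl, Sum.elim_inr, Bmat, Matrix.fromBlocks_apply₁₂,
          Matrix.of_apply]
        by_contra h
        exact absurd (row_eq hM h h1) (ne_of_lt (hyc j₀))
      · simpa [hW, hW', Bmat] using hval a b'
      · -- M x (r a') = 0
        have h1 : M x y ≠ 0 := by rw [hMxy]; exact one_ne_zero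
        simp only [hW, hW', Sum.elim_inl, Sum.elim_inr, Bmat, Matrix.fromBlocks_apply₂₁,
          Matrix.of_apply]
        by_contra h
        exact absurd (row_eq hM h h1) (ne_of_lt (lt_of_lt_of_le (hrx a') hxy))
      · simpa [hW, hW', Bmat, Matrix.one_apply, Fin.fin_one_eq_zero z, Fin.fin_one_eq_zero z']
          using hMxy
      · -- M x (c b') = 0
        have h1 : M x y ≠ 0 := by rw [hMxy]; exact one_ne_zero
        simp only [hW, hW', Sum.elim_inl, Sum.elim_inr, Bmat, Matrix.fromBlocks_apply₂₂,
          Matrix.fromBlocks_apply₁₂, Matrix.zero_apply]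
        by_contra h
        exact absurd (row_eq hM h h1) (ne_of_gt (hyc b'))
      · -- M (c b) (r a') = πᵀ
        simp only [hW, hW', Sum.elim_inl, Sum.elim_inr, Bmat, Matrix.fromBlocks_apply₂₁,
          Matrix.of_apply, Matrix.transpose_apply]
        rw [symm_apply hs]; exact hval a' b
      · -- M (c b) y = 0
        have h1 : M x y ≠ 0 := by rw [hMxy]; exact one_ne_zero
        simp only [hW, hW', Sum.elim_inl, Sum.elim_inr, Bmat, Matrix.fromBlocks_apply₂₂,
          Matrix.fromBlocks_apply₂₁, Matrix.zero_apply]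
        by_contra h
        exact absurd (col_eq hM h h1) (ne_of_gt (lt_of_le_of_lt hxy (hyc b)))
      · -- M (c b) (c b') = 0
        obtain ⟨i₀, hi₀⟩ := col_ex hπ b'
        have h1 : M (r i₀) (c b') ≠ 0 := by rw [hval]; exact hi₀
        simp only [hW, hW', Sum.elim_inr, Bmat, Matrix.fromBlocks_apply₂₂, Matrix.zero_apply]
        by_contra h
        exact absurd (col_eq hM h h1) (ne_of_gt (hrc i₀ b))
    refine ⟨fun i => W ((E k).symm i), fun j => W' ((E k).symm j), ?_, ?_, ?_⟩
    · intro i j hij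
      refine keyW _ _ ?_
      rwa [Equiv.apply_symm_apply, Equiv.apply_symm_apply]
    · intro i j hij
      refine keyW' _ _ ?_
      rwa [Equiv.apply_symm_apply, Equiv.apply_symm_apply]
    · intro i j
      have hd : doublePrimePat π i j = Bmat π ((E k).symm i) ((E k).symm j) := by
        rw [← dpp_E, Equiv.apply_symm_apply, Equiv.apply_symm_apply]
      rw [hd]
      exact keyV _ _


section Decomp

open Matrix
open scoped Classical

variable {n : ℕ}

/-- The union of rectangles strictly up-right of "centers" (+1 entries on or
above the diagonal). -/
def UU (M : Matrix (Fin n) (Fin n) ℤ) : Set (Fin n × Fin n) :=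
  {p | ∃ x y : Fin n, x ≤ y ∧ M x y = 1 ∧ p.1 < x ∧ y < p.2}

lemma UU_upper {M : Matrix (Fin n) (Fin n) ℤ} {p} (h : p ∈ UU M) : p.1 < p.2 := by
  obtain ⟨x, y, hxy, -, h1, h2⟩ := h
  exact lt_trans (lt_of_lt_of_le h1 hxy) h2

lemma UU_mono {M : Matrix (Fin n) (Fin n) ℤ} {i j i' j' : Fin n} (h : (i, j) ∈ UU M)
    (h1 : i' ≤ i) (h2 : j ≤ j') : (i', j') ∈ UU M := by
  obtain ⟨x, y, hxy, hM, ha, hb⟩ := h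
  exact ⟨x, y, hxy, hM, lt_of_le_of_lt h1 ha, lt_of_lt_of_le hb h2⟩

/-- `M` with all entries in `UU M` (and its mirror) erased. -/
noncomputable def frozen (M : Matrix (Fin n) (Fin n) ℤ) : Matrix (Fin n) (Fin n) ℤ :=
  Matrix.of fun i j => if (i, j) ∈ UU M ∨ (j, i) ∈ UU M then 0 else M i j

/-- Left endpoints of erased arcs. -/
noncomputable def Rfin (M : Matrix (Fin n) (Fin n) ℤ) : Finset (Fin n) :=
  Finset.univ.filter (fun i => ∃ j, (i, j) ∈ UU M ∧ M i j ≠ 0)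

/-- Right endpoints of erased arcs. -/
noncomputable def Cfin (M : Matrix (Fin n) (Fin n) ℤ) : Finset (Fin n) :=
  Finset.univ.filter (fun j => ∃ i, (i, j) ∈ UU M ∧ M i j ≠ 0)

lemma mem_Rfin {M : Matrix (Fin n) (Fin n) ℤ} {i : Fin n} :
    i ∈ Rfin M ↔ ∃ j, (i, j) ∈ UU M ∧ M i j ≠ 0 := by
  classical simp [Rfin]

lemma mem_Cfin {M : Matrix (Fin n) (Fin n) ℤ} {j : Fin n} :
    j ∈ Cfin M ↔ ∃ i, (i, j) ∈ UU M ∧ M i j ≠ 0 := by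
  classical simp [Cfin]

lemma frozen_apply (M : Matrix (Fin n) (Fin n) ℤ) (i j : Fin n) :
    frozen M i j = if (i, j) ∈ UU M ∨ (j, i) ∈ UU M then 0 else M i j := rfl

lemma frozen_eq_of_notMem {M : Matrix (Fin n) (Fin n) ℤ} {i j : Fin n}
    (h : ¬ ((i, j) ∈ UU M ∨ (j, i) ∈ UU M)) : frozen M i j = M i j := by
  rw [frozen_apply, if_neg h]

lemma frozen_zero_of_mem {M : Matrix (Fin n) (Fin n) ℤ} {i j : Fin n}
    (h : (i, j) ∈ UU M ∨ (j, i) ∈ UU M) : frozen M i j = 0 := by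
  rw [frozen_apply, if_pos h]

lemma frozen_diag (M : Matrix (Fin n) (Fin n) ℤ) (i : Fin n) : frozen M i i = M i i := by
  apply frozen_eq_of_notMem
  rintro (h | h) <;> exact absurd (UU_upper h) (lt_irrefl i)

lemma frozen_symm {M : Matrix (Fin n) (Fin n) ℤ} (hs : M.IsSymm) : (frozen M).IsSymm := by
  rw [Matrix.IsSymm]
  ext i j
  rw [Matrix.transpose_apply, frozen_apply, frozen_apply]
  by_cases h : (i, j) ∈ UU M ∨ (j, i) ∈ UU M
  · rw [if_pos h, if_pos (Or.symm h)]
  · rw [if_neg h, if_neg (fun hh => h (Or.symm hh)), symm_apply hs]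

/-- Key: the centers of `frozen M` generate the same region. -/
lemma UU_frozen (M : Matrix (Fin n) (Fin n) ℤ) : UU (frozen M) = UU M := by
  classical
  apply Set.Subset.antisymm
  · rintro ⟨i, j⟩ ⟨x, y, hxy, h1, hix, hyj⟩
    refine ⟨x, y, hxy, ?_, hix, hyj⟩
    rw [frozen_apply] at h1
    by_cases h : (x, y) ∈ UU M ∨ (y, x) ∈ UU M
    · rw [if_pos h] at h1; exact absurd h1 (by norm_num)
    · rwa [if_neg h] at h1
  · rintro ⟨i, j⟩ ⟨x, y, hxy, h1, hix, hyj⟩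
    set T : Finset (Fin n) :=
      Finset.univ.filter (fun x' => ∃ y', x' ≤ y' ∧ M x' y' = 1 ∧ i < x' ∧ y' < j) with hT
    have hxT : x ∈ T := by simp only [hT, Finset.mem_filter, Finset.mem_univ, true_and]
                           exact ⟨y, hxy, h1, hix, hyj⟩
    have hTne : T.Nonempty := ⟨x, hxT⟩
    set x₀ := T.max' hTne with hx₀
    have hx₀T := T.max'_mem hTne
    simp only [hT, Finset.mem_filter, Finset.mem_univ, true_and] at hx₀T
    obtain ⟨y₀, hxy₀, h1₀, hix₀, hy₀j⟩ := hx₀T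
    have hfroz : frozen M x₀ y₀ = 1 := by
      rw [frozen_eq_of_notMem, h1₀]
      rintro (h | h)
      · obtain ⟨x₁, y₁, hxy₁, h1₁, ha, hb⟩ := h
        have hx₁T : x₁ ∈ T := by
          simp only [hT, Finset.mem_filter, Finset.mem_univ, true_and]
          exact ⟨y₁, hxy₁, h1₁, lt_trans hix₀ ha, lt_trans hb hy₀j⟩
        exact absurd (T.le_max' x₁ hx₁T) (not_le.mpr ha)
      · exact absurd (UU_upper h) (not_lt.mpr hxy₀)
    exact ⟨x₀, y₀, hxy₀, hfroz, hix₀, hy₀j⟩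

/-- F2: rows indexed by `Rfin`/`Cfin` vanish in `frozen M`. -/
lemma frozen_row_zero_R {M : Matrix (Fin n) (Fin n) ℤ} (hM : IsSignedPermMatrix M)
    {i : Fin n} (hi : i ∈ Rfin M) (j : Fin n) : frozen M i j = 0 := by
  obtain ⟨j₀, hj₀U, hj₀⟩ := mem_Rfin.mp hi
  by_cases hMij : M i j = 0
  · rw [frozen_apply]; split <;> simp [hMij]
  · rw [row_eq hM hMij hj₀]
    exact frozen_zero_of_mem (Or.inl hj₀U)

lemma frozen_row_zero_C {M : Matrix (Fin n) (Fin n) ℤ} (hM : IsSignedPermMatrix M)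
    (hs : M.IsSymm) {i : Fin n} (hi : i ∈ Cfin M) (j : Fin n) : frozen M i j = 0 := by
  obtain ⟨i₀, hi₀U, hi₀⟩ := mem_Cfin.mp hi
  by_cases hMij : M i j = 0
  · rw [frozen_apply]; split <;> simp [hMij]
  · have hMii₀ : M i i₀ ≠ 0 := by rw [symm_apply hs]; exact hi₀
    rw [row_eq hM hMij hMii₀]
    exact frozen_zero_of_mem (Or.inr hi₀U)

/-- F3: other rows of `frozen M` agree with `M`. -/
lemma frozen_row_eq {M : Matrix (Fin n) (Fin n) ℤ} (hs : M.IsSymm)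
    {i : Fin n} (hiR : i ∉ Rfin M) (hiC : i ∉ Cfin M) (j : Fin n) : frozen M i j = M i j := by
  by_cases hMij : M i j = 0
  · rw [frozen_apply]; split <;> simp [hMij]
  · apply frozen_eq_of_notMem
    rintro (h | h)
    · exact hiR (mem_Rfin.mpr ⟨j, h, hMij⟩)
    · have : M j i ≠ 0 := by rw [symm_apply hs]; exact hMij
      exact hiC (mem_Cfin.mpr ⟨j, h, this⟩)

/-- F5: `Rfin` and `Cfin` are disjoint. -/
lemma Rfin_disj_Cfin {M : Matrix (Fin n) (Fin n) ℤ} (hM : IsSignedPermMatrix M)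
    (hs : M.IsSymm) {i : Fin n} (hiR : i ∈ Rfin M) (hiC : i ∈ Cfin M) : False := by
  obtain ⟨j₀, hj₀U, hj₀⟩ := mem_Rfin.mp hiR
  obtain ⟨i₀, hi₀U, hi₀⟩ := mem_Cfin.mp hiC
  have hMii₀ : M i i₀ ≠ 0 := by rw [symm_apply hs]; exact hi₀
  have : j₀ = i₀ := row_eq hM hj₀ hMii₀
  have h1 : (i : ℕ) < j₀ := UU_upper hj₀U
  have h2 : (i₀ : ℕ) < i := UU_upper hi₀U
  omega

/-- F4: every element of `Rfin M` is the left endpoint of an erased arc. -/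
lemma Rfin_arc {M : Matrix (Fin n) (Fin n) ℤ} {i : Fin n} (hi : i ∈ Rfin M) :
    ∃ j ∈ Cfin M, (i, j) ∈ UU M ∧ M i j ≠ 0 := by
  obtain ⟨j₀, hj₀U, hj₀⟩ := mem_Rfin.mp hi
  exact ⟨j₀, mem_Cfin.mpr ⟨i, hj₀U, hj₀⟩, hj₀U, hj₀⟩

lemma Cfin_arc {M : Matrix (Fin n) (Fin n) ℤ} {j : Fin n} (hj : j ∈ Cfin M) :
    ∃ i ∈ Rfin M, (i, j) ∈ UU M ∧ M i j ≠ 0 := by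
  obtain ⟨i₀, hi₀U, hi₀⟩ := mem_Cfin.mp hj
  exact ⟨i₀, mem_Rfin.mpr ⟨j, hi₀U, hi₀⟩, hi₀U, hi₀⟩

/-- Decomposition data: frozen part plus the row and column sets of the erased part. -/
structure DData (n : ℕ) where
  M0 : Matrix (Fin n) (Fin n) ℤ
  Rf : Finset (Fin n)
  Cf : Finset (Fin n)

/-- The decomposition datum of a matrix. -/
noncomputable def Dmap (M : Matrix (Fin n) (Fin n) ℤ) : DData n :=
  ⟨frozen M, Rfin M, Cfin M⟩

-- rank helpers
noncomputable def rk (s : Finset (Fin n)) (i : Fin n) (h : i ∈ s) : ℕ :=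
  ((s.orderIsoOfFin rfl).symm ⟨i, h⟩ : Fin s.card)

lemma rk_lt {s : Finset (Fin n)} {i : Fin n} (h : i ∈ s) : rk s i h < s.card :=
  ((s.orderIsoOfFin rfl).symm ⟨i, h⟩).isLt

lemma iso_rk {s : Finset (Fin n)} {i : Fin n} (h : i ∈ s) :
    ((s.orderIsoOfFin rfl ⟨rk s i h, rk_lt h⟩ : {x // x ∈ s}) : Fin n) = i := by
  have : (⟨rk s i h, rk_lt h⟩ : Fin s.card) = (s.orderIsoOfFin rfl).symm ⟨i, h⟩ := rfl
  rw [this, OrderIso.apply_symm_apply]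

lemma rk_iso {s : Finset (Fin n)} (a : Fin s.card)
    (h : ((s.orderIsoOfFin rfl a : {x // x ∈ s}) : Fin n) ∈ s) :
    rk s _ h = (a : ℕ) := by
  unfold rk
  congr 1
  have : (⟨((s.orderIsoOfFin rfl a : {x // x ∈ s}) : Fin n), h⟩ : {x // x ∈ s}) =
      s.orderIsoOfFin rfl a := Subtype.ext rfl
  rw [this, OrderIso.symm_apply_apply]

lemma iso_mem {s : Finset (Fin n)} (a : Fin s.card) :
    ((s.orderIsoOfFin rfl a : {x // x ∈ s}) : Fin n) ∈ s := (s.orderIsoOfFin rfl a).2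

lemma iso_lt_iso {s : Finset (Fin n)} {a b : Fin s.card} :
    ((s.orderIsoOfFin rfl a : {x // x ∈ s}) : Fin n) <
      ((s.orderIsoOfFin rfl b : {x // x ∈ s}) : Fin n) ↔ a < b := by
  rw [Subtype.coe_lt_coe, OrderIso.lt_iff_lt]

lemma iso_le_iso {s : Finset (Fin n)} {a b : Fin s.card} :
    ((s.orderIsoOfFin rfl a : {x // x ∈ s}) : Fin n) ≤
      ((s.orderIsoOfFin rfl b : {x // x ∈ s}) : Fin n) ↔ a ≤ b := by
  rw [Subtype.coe_le_coe, OrderIso.le_iff_le]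

lemma rk_lt_rk {s : Finset (Fin n)} {i i' : Fin n} (h : i ∈ s) (h' : i' ∈ s)
    (hlt : i < i') : rk s i h < rk s i' h' := by
  have := (OrderIso.lt_iff_lt (s.orderIsoOfFin rfl).symm).mpr
    (show (⟨i, h⟩ : {x // x ∈ s}) < ⟨i', h'⟩ from Subtype.mk_lt_mk.mpr hlt)
  exact this

/-- The NE-shape associated to a decomposition datum. -/
noncomputable def shapeOf (d : DData n) : NEShape where
  width := d.Cf.card
  cells := ((Finset.univ : Finset (Fin d.Rf.card × Fin d.Cf.card)).filter
      (fun p => (((d.Rf.orderIsoOfFin rfl p.1 : {x // x ∈ d.Rf}) : Fin n),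
        ((d.Cf.orderIsoOfFin rfl p.2 : {x // x ∈ d.Cf}) : Fin n)) ∈ UU d.M0)).image
      (fun p => ((p.1 : ℕ), (p.2 : ℕ)))
  col_lt := by
    rintro p hp
    simp only [Finset.mem_image, Finset.mem_filter, Finset.mem_univ, true_and] at hp
    obtain ⟨q, -, rfl⟩ := hp
    exact q.2.isLt
  upRight := by
    rintro p hp i j hi hj hjw
    simp only [Finset.mem_image, Finset.mem_filter, Finset.mem_univ, true_and] at hp ⊢
    obtain ⟨q, hq, rfl⟩ := hp
    refine ⟨(⟨i, lt_of_le_of_lt hi q.1.isLt⟩, ⟨j, hjw⟩), ?_, rfl⟩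
    refine UU_mono hq ?_ ?_
    · exact iso_le_iso.mpr (by exact hi)
    · exact iso_le_iso.mpr (by exact hj)

lemma mem_cells {d : DData n} {p : ℕ × ℕ} :
    p ∈ (shapeOf d).cells ↔ ∃ (ha : p.1 < d.Rf.card) (hb : p.2 < d.Cf.card),
      (((d.Rf.orderIsoOfFin rfl ⟨p.1, ha⟩ : {x // x ∈ d.Rf}) : Fin n),
        ((d.Cf.orderIsoOfFin rfl ⟨p.2, hb⟩ : {x // x ∈ d.Cf}) : Fin n)) ∈ UU d.M0 := by
  constructor
  · intro hp
    simp only [shapeOf, Finset.mem_image, Finset.mem_filter, Finset.mem_univ, true_and] at hp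
    obtain ⟨q, hq, hpq⟩ := hp
    subst hpq
    exact ⟨q.1.isLt, q.2.isLt, by simpa only [Fin.eta] using hq⟩
  · rintro ⟨ha, hb, hU⟩
    simp only [shapeOf, Finset.mem_image, Finset.mem_filter, Finset.mem_univ, true_and]
    exact ⟨(⟨p.1, ha⟩, ⟨p.2, hb⟩), hU, rfl⟩

/-- The filling read off from a matrix, relative to a decomposition datum. -/
noncomputable def fillOf (d : DData n) (M : Matrix (Fin n) (Fin n) ℤ) : ℕ × ℕ → ℤ :=
  fun p =>
    if h : p.1 < d.Rf.card ∧ p.2 < d.Cf.card then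
      (if (((d.Rf.orderIsoOfFin rfl ⟨p.1, h.1⟩ : {x // x ∈ d.Rf}) : Fin n),
            ((d.Cf.orderIsoOfFin rfl ⟨p.2, h.2⟩ : {x // x ∈ d.Cf}) : Fin n)) ∈ UU d.M0 then
        M ((d.Rf.orderIsoOfFin rfl ⟨p.1, h.1⟩ : {x // x ∈ d.Rf}) : Fin n)
          ((d.Cf.orderIsoOfFin rfl ⟨p.2, h.2⟩ : {x // x ∈ d.Cf}) : Fin n)
      else 0)
    else 0

/-- Reconstruction of a matrix from a decomposition datum and a filling. -/
noncomputable def recon (d : DData n) (g : ℕ × ℕ → ℤ) : Matrix (Fin n) (Fin n) ℤ :=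
  Matrix.of fun i j =>
    if hij : i ∈ d.Rf ∧ j ∈ d.Cf ∧ (i, j) ∈ UU d.M0 then
      g (rk d.Rf i hij.1, rk d.Cf j hij.2.1)
    else if hji : j ∈ d.Rf ∧ i ∈ d.Cf ∧ (j, i) ∈ UU d.M0 then
      g (rk d.Rf j hji.1, rk d.Cf i hji.2.1)
    else d.M0 i j

end Decomp

end Stmt2Aux

namespace Stmt2Aux

section Core2

open Matrix
open scoped Classical

variable {n k : ℕ}

lemma Dmap_M0 {M : Matrix (Fin n) (Fin n) ℤ} {d : DData n} (hd : Dmap M = d) :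
    d.M0 = frozen M := by rw [← hd]; rfl

lemma Dmap_Rf {M : Matrix (Fin n) (Fin n) ℤ} {d : DData n} (hd : Dmap M = d) :
    d.Rf = Rfin M := by rw [← hd]; rfl

lemma Dmap_Cf {M : Matrix (Fin n) (Fin n) ℤ} {d : DData n} (hd : Dmap M = d) :
    d.Cf = Cfin M := by rw [← hd]; rfl

lemma Dmap_UU {M : Matrix (Fin n) (Fin n) ℤ} {d : DData n} (hd : Dmap M = d) :
    UU d.M0 = UU M := by rw [Dmap_M0 hd, UU_frozen]

lemma fillOf_pos {d : DData n} (M : Matrix (Fin n) (Fin n) ℤ) {a b : ℕ}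
    (ha : a < d.Rf.card) (hb : b < d.Cf.card)
    (hU : (((d.Rf.orderIsoOfFin rfl ⟨a, ha⟩ : {x // x ∈ d.Rf}) : Fin n),
      ((d.Cf.orderIsoOfFin rfl ⟨b, hb⟩ : {x // x ∈ d.Cf}) : Fin n)) ∈ UU d.M0) :
    fillOf d M (a, b) =
      M ((d.Rf.orderIsoOfFin rfl ⟨a, ha⟩ : {x // x ∈ d.Rf}) : Fin n)
        ((d.Cf.orderIsoOfFin rfl ⟨b, hb⟩ : {x // x ∈ d.Cf}) : Fin n) := by
  unfold fillOf
  rw [dif_pos ⟨ha, hb⟩, if_pos hU]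

lemma fillOf_ne_zero {d : DData n} {M : Matrix (Fin n) (Fin n) ℤ} {p : ℕ × ℕ}
    (h : fillOf d M p ≠ 0) :
    ∃ (ha : p.1 < d.Rf.card) (hb : p.2 < d.Cf.card),
      (((d.Rf.orderIsoOfFin rfl ⟨p.1, ha⟩ : {x // x ∈ d.Rf}) : Fin n),
        ((d.Cf.orderIsoOfFin rfl ⟨p.2, hb⟩ : {x // x ∈ d.Cf}) : Fin n)) ∈ UU d.M0 ∧
      M ((d.Rf.orderIsoOfFin rfl ⟨p.1, ha⟩ : {x // x ∈ d.Rf}) : Fin n)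
        ((d.Cf.orderIsoOfFin rfl ⟨p.2, hb⟩ : {x // x ∈ d.Cf}) : Fin n) ≠ 0 := by
  unfold fillOf at h
  by_cases hb : p.1 < d.Rf.card ∧ p.2 < d.Cf.card
  · rw [dif_pos hb] at h
    by_cases hU : (((d.Rf.orderIsoOfFin rfl ⟨p.1, hb.1⟩ : {x // x ∈ d.Rf}) : Fin n),
        ((d.Cf.orderIsoOfFin rfl ⟨p.2, hb.2⟩ : {x // x ∈ d.Cf}) : Fin n)) ∈ UU d.M0
    · rw [if_pos hU] at h
      exact ⟨hb.1, hb.2, hU, h⟩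
    · rw [if_neg hU] at h; exact absurd rfl h
  · rw [dif_neg hb] at h; exact absurd rfl h

lemma fill_transversal {M : Matrix (Fin n) (Fin n) ℤ} (hM : IsSignedPermMatrix M)
    (hs : M.IsSymm) {d : DData n} (hd : Dmap M = d) :
    NEIsSignedTransversal (shapeOf d) (fillOf d M) := by
  refine ⟨⟨?_, ?_, ?_, ?_⟩, ?_, ?_⟩
  · -- support in cells
    intro p hp
    obtain ⟨ha, hb, hU, -⟩ := fillOf_ne_zero hp
    exact mem_cells.mpr ⟨ha, hb, hU⟩
  · -- values
    intro p
    unfold fillOf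
    split_ifs with h1 h2
    · exact hM.1 _ _
    · exact Or.inl rfl
    · exact Or.inl rfl
  · -- row subsingleton
    intro i j hj j' hj'
    simp only [Set.mem_setOf_eq] at hj hj'
    obtain ⟨ha, hb, hU, hne⟩ := fillOf_ne_zero hj
    obtain ⟨ha', hb', hU', hne'⟩ := fillOf_ne_zero hj'
    have := row_eq hM hne hne'
    have h2 : (⟨j, hb⟩ : Fin d.Cf.card) = ⟨j', hb'⟩ := by
      have := (d.Cf.orderIsoOfFin rfl).injective (Subtype.ext this)
      exact this
    exact congrArg Fin.val h2
  · -- col subsingleton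
    intro j i hi i' hi'
    simp only [Set.mem_setOf_eq] at hi hi'
    obtain ⟨ha, hb, hU, hne⟩ := fillOf_ne_zero hi
    obtain ⟨ha', hb', hU', hne'⟩ := fillOf_ne_zero hi'
    have := col_eq hM hne hne'
    have h2 : (⟨i, ha⟩ : Fin d.Rf.card) = ⟨i', ha'⟩ := by
      have := (d.Rf.orderIsoOfFin rfl).injective (Subtype.ext this)
      exact this
    exact congrArg Fin.val h2
  · -- rows covered
    intro i ⟨j, hij⟩
    obtain ⟨ha, hb, hU⟩ := mem_cells.mp hij
    have hiR : ((d.Rf.orderIsoOfFin rfl ⟨i, ha⟩ : {x // x ∈ d.Rf}) : Fin n) ∈ Rfin M := by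
      rw [← Dmap_Rf hd]; exact iso_mem _
    obtain ⟨jc, hjcC, hjcU, hjcne⟩ := Rfin_arc hiR
    have hjcC' : jc ∈ d.Cf := by rw [Dmap_Cf hd]; exact hjcC
    refine ⟨rk d.Cf jc hjcC', ?_⟩
    rw [show (i, rk d.Cf jc hjcC') = ((i : ℕ), rk d.Cf jc hjcC') from rfl,
      fillOf_pos M ha (rk_lt hjcC')]
    · rw [iso_rk]; exact hjcne
    · rw [iso_rk, Dmap_UU hd]; exact hjcU
  · -- cols covered
    intro j ⟨i, hij⟩
    obtain ⟨ha, hb, hU⟩ := mem_cells.mp hij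
    have hjC : ((d.Cf.orderIsoOfFin rfl ⟨j, hb⟩ : {x // x ∈ d.Cf}) : Fin n) ∈ Cfin M := by
      rw [← Dmap_Cf hd]; exact iso_mem _
    obtain ⟨ir, hirR, hirU, hirne⟩ := Cfin_arc hjC
    have hirR' : ir ∈ d.Rf := by rw [Dmap_Rf hd]; exact hirR
    refine ⟨rk d.Rf ir hirR', ?_⟩
    rw [show (rk d.Rf ir hirR', j) = (rk d.Rf ir hirR', (j : ℕ)) from rfl,
      fillOf_pos M (rk_lt hirR') hb]
    · rw [iso_rk]; exact hirne
    · rw [iso_rk, Dmap_UU hd]; exact hirU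

end Core2

end Stmt2Aux

namespace Stmt2Aux

section Core3

open Matrix
open scoped Classical

variable {n k : ℕ}

lemma center_iff_necontains {π : Matrix (Fin k) (Fin k) ℤ} (hπ : IsSignedPermMatrix π)
    (hk : 0 < k) {M : Matrix (Fin n) (Fin n) ℤ} (hM : IsSignedPermMatrix M)
    {d : DData n} (hd : Dmap M = d) :
    CenterCond M π ↔ NEContains (shapeOf d) (fillOf d M) π := by
  constructor
  · rintro ⟨x, y, hxy, hMxy, r, c, hr, hc, hrx, hyc, hval⟩
    have hUrc : ∀ a b, (r a, c b) ∈ UU M := fun a b => ⟨x, y, hxy, hMxy, hrx a, hyc b⟩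
    have memR : ∀ a, r a ∈ d.Rf := by
      intro a
      obtain ⟨j₀, hj₀⟩ := row_ex hπ a
      rw [Dmap_Rf hd, mem_Rfin]
      exact ⟨c j₀, hUrc a j₀, by rw [hval]; exact hj₀⟩
    have memC : ∀ b, c b ∈ d.Cf := by
      intro b
      obtain ⟨i₀, hi₀⟩ := col_ex hπ b
      rw [Dmap_Cf hd, mem_Cfin]
      exact ⟨r i₀, hUrc i₀ b, by rw [hval]; exact hi₀⟩
    refine ⟨fun a => rk d.Rf (r a) (memR a), fun b => rk d.Cf (c b) (memC b), ?_, ?_, ?_, ?_⟩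
    · intro a a' h; exact rk_lt_rk _ _ (hr h)
    · intro b b' h; exact rk_lt_rk _ _ (hc h)
    · intro a b
      refine mem_cells.mpr ⟨rk_lt (memR a), rk_lt (memC b), ?_⟩
      rw [iso_rk, iso_rk, Dmap_UU hd]
      exact hUrc a b
    · intro a b
      rw [fillOf_pos M (rk_lt (memR a)) (rk_lt (memC b))
          (by rw [iso_rk, iso_rk, Dmap_UU hd]; exact hUrc a b), iso_rk, iso_rk]
      exact hval a b
  · rintro ⟨R', C', hR', hC', hcells, hvals⟩
    have ha : ∀ a, R' a < d.Rf.card := fun a => (mem_cells.mp (hcells a ⟨0, hk⟩)).1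
    have hb : ∀ b, C' b < d.Cf.card := by
      intro b
      obtain ⟨-, h, -⟩ := mem_cells.mp (hcells ⟨0, hk⟩ b)
      exact h
    set ra : Fin k → Fin n :=
      fun a => ((d.Rf.orderIsoOfFin rfl ⟨R' a, ha a⟩ : {x // x ∈ d.Rf}) : Fin n) with hra
    set cb : Fin k → Fin n :=
      fun b => ((d.Cf.orderIsoOfFin rfl ⟨C' b, hb b⟩ : {x // x ∈ d.Cf}) : Fin n) with hcb
    have hU : ∀ a b, (ra a, cb b) ∈ UU M := by
      intro a b
      obtain ⟨ha', hb', hU⟩ := mem_cells.mp (hcells a b)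
      rw [← Dmap_UU hd]
      exact hU
    have hval' : ∀ a b, M (ra a) (cb b) = π a b := by
      intro a b
      rw [← hvals a b, fillOf_pos M (ha a) (hb b) (by rw [Dmap_UU hd]; exact hU a b)]
    have hamax : ∀ a : Fin k, ra a ≤ ra ⟨k - 1, by omega⟩ := by
      intro a
      simp only [hra]
      rw [iso_le_iso]
      exact Fin.mk_le_mk.mpr (hR'.monotone (Fin.mk_le_mk.mpr (by omega)))
    have hbmin : ∀ b : Fin k, cb ⟨0, hk⟩ ≤ cb b := by
      intro b
      simp only [hcb]
      rw [iso_le_iso]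
      exact Fin.mk_le_mk.mpr (hC'.monotone (Fin.mk_le_mk.mpr (by omega)))
    obtain ⟨x, y, hxy, hMxy, hax, hyb⟩ := hU ⟨k - 1, by omega⟩ ⟨0, hk⟩
    refine ⟨x, y, hxy, hMxy, ra, cb, ?_, ?_, ?_, ?_, hval'⟩
    · intro a a' h
      simp only [hra]
      rw [iso_lt_iso]
      exact Fin.mk_lt_mk.mpr (hR' h)
    · intro b b' h
      simp only [hcb]
      rw [iso_lt_iso]
      exact Fin.mk_lt_mk.mpr (hC' h)
    · exact fun a => lt_of_le_of_lt (hamax a) hax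
    · exact fun b => lt_of_lt_of_le hyb (hbmin b)

lemma recon_b1 {d : DData n} (g : ℕ × ℕ → ℤ) {i j : Fin n}
    (h1 : i ∈ d.Rf) (h2 : j ∈ d.Cf) (h3 : (i, j) ∈ UU d.M0) :
    recon d g i j = g (rk d.Rf i h1, rk d.Cf j h2) := by
  unfold recon
  rw [Matrix.of_apply, dif_pos ⟨h1, h2, h3⟩]

lemma recon_b2 {d : DData n} (g : ℕ × ℕ → ℤ) {i j : Fin n}
    (h1 : j ∈ d.Rf) (h2 : i ∈ d.Cf) (h3 : (j, i) ∈ UU d.M0) :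
    recon d g i j = g (rk d.Rf j h1, rk d.Cf i h2) := by
  unfold recon
  rw [Matrix.of_apply, dif_neg, dif_pos ⟨h1, h2, h3⟩]
  rintro ⟨-, -, h⟩
  exact absurd (lt_trans (UU_upper h) (UU_upper h3)) (lt_irrefl i)

lemma recon_b0 {d : DData n} (g : ℕ × ℕ → ℤ) {i j : Fin n}
    (h1 : ¬ (i ∈ d.Rf ∧ j ∈ d.Cf ∧ (i, j) ∈ UU d.M0))
    (h2 : ¬ (j ∈ d.Rf ∧ i ∈ d.Cf ∧ (j, i) ∈ UU d.M0)) :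
    recon d g i j = d.M0 i j := by
  unfold recon
  rw [Matrix.of_apply, dif_neg h1, dif_neg h2]

lemma recon_fill {M : Matrix (Fin n) (Fin n) ℤ} (hM : IsSignedPermMatrix M)
    (hs : M.IsSymm) {d : DData n} (hd : Dmap M = d) : recon d (fillOf d M) = M := by
  ext i j
  by_cases hb1 : i ∈ d.Rf ∧ j ∈ d.Cf ∧ (i, j) ∈ UU d.M0
  · rw [recon_b1 _ hb1.1 hb1.2.1 hb1.2.2,
      fillOf_pos M (rk_lt hb1.1) (rk_lt hb1.2.1) (by rw [iso_rk, iso_rk]; exact hb1.2.2),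
      iso_rk, iso_rk]
  · by_cases hb2 : j ∈ d.Rf ∧ i ∈ d.Cf ∧ (j, i) ∈ UU d.M0
    · rw [recon_b2 _ hb2.1 hb2.2.1 hb2.2.2,
        fillOf_pos M (rk_lt hb2.1) (rk_lt hb2.2.1) (by rw [iso_rk, iso_rk]; exact hb2.2.2),
        iso_rk, iso_rk]
      exact symm_apply hs j i
    · rw [recon_b0 _ hb1 hb2, Dmap_M0 hd]
      by_cases hU1 : (i, j) ∈ UU M
      · have hM0 : M i j = 0 := by
          by_contra hne
          exact hb1 ⟨by rw [Dmap_Rf hd, mem_Rfin]; exact ⟨j, hU1, hne⟩,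
            by rw [Dmap_Cf hd, mem_Cfin]; exact ⟨i, hU1, hne⟩,
            by rw [Dmap_UU hd]; exact hU1⟩
        rw [frozen_zero_of_mem (Or.inl hU1), hM0]
      · by_cases hU2 : (j, i) ∈ UU M
        · have hM0 : M i j = 0 := by
            by_contra hne
            have hne' : M j i ≠ 0 := by rw [symm_apply hs]; exact hne
            exact hb2 ⟨by rw [Dmap_Rf hd, mem_Rfin]; exact ⟨i, hU2, hne'⟩,
              by rw [Dmap_Cf hd, mem_Cfin]; exact ⟨j, hU2, hne'⟩,
              by rw [Dmap_UU hd]; exact hU2⟩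
          rw [frozen_zero_of_mem (Or.inr hU2), hM0]
        · exact frozen_eq_of_notMem (by tauto)

lemma fill_recon {d : DData n} {g : ℕ × ℕ → ℤ}
    (hg : NEIsSignedTransversal (shapeOf d) g) : fillOf d (recon d g) = g := by
  funext p
  by_cases hbd : p.1 < d.Rf.card ∧ p.2 < d.Cf.card
  · by_cases hU : (((d.Rf.orderIsoOfFin rfl ⟨p.1, hbd.1⟩ : {x // x ∈ d.Rf}) : Fin n),
        ((d.Cf.orderIsoOfFin rfl ⟨p.2, hbd.2⟩ : {x // x ∈ d.Cf}) : Fin n)) ∈ UU d.M0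
    · have : fillOf d (recon d g) p = fillOf d (recon d g) (p.1, p.2) := by rw [Prod.mk.eta]
      rw [this, fillOf_pos _ hbd.1 hbd.2 hU, recon_b1 g (iso_mem _) (iso_mem _) hU,
        rk_iso, rk_iso, Prod.mk.eta]
    · unfold fillOf
      rw [dif_pos hbd, if_neg hU]
      by_contra hne
      obtain ⟨ha, hb, hU'⟩ := mem_cells.mp (hg.1.1 p (fun h => hne h.symm))
      exact hU hU'
  · unfold fillOf
    rw [dif_neg hbd]
    by_contra hne
    obtain ⟨ha, hb, -⟩ := mem_cells.mp (hg.1.1 p (fun h => hne h.symm))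
    exact hbd ⟨ha, hb⟩

end Core3

end Stmt2Aux

namespace Stmt2Aux

section Core4

open Matrix
open scoped Classical

variable {n : ℕ} {W : Matrix (Fin n) (Fin n) ℤ} {d : DData n} {g : ℕ × ℕ → ℤ}

lemma mem_cells' {d : DData n} {a b : ℕ} (h : (a, b) ∈ (shapeOf d).cells) :
    ∃ (ha : a < d.Rf.card) (hb : b < d.Cf.card),
      (((d.Rf.orderIsoOfFin rfl ⟨a, ha⟩ : {x // x ∈ d.Rf}) : Fin n),
        ((d.Cf.orderIsoOfFin rfl ⟨b, hb⟩ : {x // x ∈ d.Cf}) : Fin n)) ∈ UU d.M0 :=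
  mem_cells.mp h

lemma M0_zero (hWd : Dmap W = d) {i j : Fin n}
    (h : (i, j) ∈ UU d.M0 ∨ (j, i) ∈ UU d.M0) : d.M0 i j = 0 := by
  rw [Dmap_M0 hWd]
  apply frozen_zero_of_mem
  rwa [Dmap_UU hWd] at h

lemma M0_symm (hWs : W.IsSymm) (hWd : Dmap W = d) : d.M0.IsSymm := by
  rw [Dmap_M0 hWd]; exact frozen_symm hWs

lemma RC_disj (hW : IsSignedPermMatrix W) (hWs : W.IsSymm) (hWd : Dmap W = d)
    {i : Fin n} (h1 : i ∈ d.Rf) (h2 : i ∈ d.Cf) : False := by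
  rw [Dmap_Rf hWd] at h1
  rw [Dmap_Cf hWd] at h2
  exact Rfin_disj_Cfin hW hWs h1 h2

lemma g_row_ex (hWd : Dmap W = d) (hg : NEIsSignedTransversal (shapeOf d) g)
    {i : Fin n} (hi : i ∈ d.Rf) :
    ∃ j, ∃ (hj : j ∈ d.Cf), (i, j) ∈ UU d.M0 ∧ g (rk d.Rf i hi, rk d.Cf j hj) ≠ 0 := by
  have hiR : i ∈ Rfin W := by rw [← Dmap_Rf hWd]; exact hi
  obtain ⟨jc, hjcC, hjcU, hjcne⟩ := Rfin_arc hiR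
  have hjcC' : jc ∈ d.Cf := by rw [Dmap_Cf hWd]; exact hjcC
  have hcell : ((rk d.Rf i hi, rk d.Cf jc hjcC') : ℕ × ℕ) ∈ (shapeOf d).cells :=
    mem_cells.mpr ⟨rk_lt hi, rk_lt hjcC',
      by rw [iso_rk, iso_rk, Dmap_UU hWd]; exact hjcU⟩
  obtain ⟨j', hj'⟩ := hg.2.1 (rk d.Rf i hi) ⟨_, hcell⟩
  obtain ⟨ha, hb, hU⟩ := mem_cells' (hg.1.1 _ hj')
  rw [iso_rk] at hU
  refine ⟨((d.Cf.orderIsoOfFin rfl ⟨j', hb⟩ : {x // x ∈ d.Cf}) : Fin n), iso_mem _, hU, ?_⟩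
  rw [rk_iso]
  exact hj'

lemma g_col_ex (hWd : Dmap W = d) (hg : NEIsSignedTransversal (shapeOf d) g)
    {j : Fin n} (hj : j ∈ d.Cf) :
    ∃ i, ∃ (hi : i ∈ d.Rf), (i, j) ∈ UU d.M0 ∧ g (rk d.Rf i hi, rk d.Cf j hj) ≠ 0 := by
  have hjC : j ∈ Cfin W := by rw [← Dmap_Cf hWd]; exact hj
  obtain ⟨ir, hirR, hirU, hirne⟩ := Cfin_arc hjC
  have hirR' : ir ∈ d.Rf := by rw [Dmap_Rf hWd]; exact hirR
  have hcell : ((rk d.Rf ir hirR', rk d.Cf j hj) : ℕ × ℕ) ∈ (shapeOf d).cells :=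
    mem_cells.mpr ⟨rk_lt hirR', rk_lt hj,
      by rw [iso_rk, iso_rk, Dmap_UU hWd]; exact hirU⟩
  obtain ⟨i', hi'⟩ := hg.2.2 (rk d.Cf j hj) ⟨_, hcell⟩
  obtain ⟨ha, hb, hU⟩ := mem_cells' (hg.1.1 _ hi')
  rw [iso_rk] at hU
  refine ⟨((d.Rf.orderIsoOfFin rfl ⟨i', ha⟩ : {x // x ∈ d.Rf}) : Fin n), iso_mem _, hU, ?_⟩
  rw [rk_iso]
  exact hi'

lemma recon_symm (hWs : W.IsSymm) (hWd : Dmap W = d) : (recon d g).IsSymm := by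
  rw [Matrix.IsSymm]
  ext i j
  rw [Matrix.transpose_apply]
  by_cases hb1 : i ∈ d.Rf ∧ j ∈ d.Cf ∧ (i, j) ∈ UU d.M0
  · rw [recon_b1 g hb1.1 hb1.2.1 hb1.2.2, recon_b2 g hb1.1 hb1.2.1 hb1.2.2]
  · by_cases hb2 : j ∈ d.Rf ∧ i ∈ d.Cf ∧ (j, i) ∈ UU d.M0
    · rw [recon_b2 g hb2.1 hb2.2.1 hb2.2.2, recon_b1 g hb2.1 hb2.2.1 hb2.2.2]
    · rw [recon_b0 g hb2 hb1, recon_b0 g hb1 hb2]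
      exact symm_apply (M0_symm hWs hWd) j i

lemma recon_entries (hW : IsSignedPermMatrix W) (hWd : Dmap W = d)
    (hg : NEIsSignedTransversal (shapeOf d) g) (i j : Fin n) :
    recon d g i j = 0 ∨ recon d g i j = 1 ∨ recon d g i j = -1 := by
  by_cases hb1 : i ∈ d.Rf ∧ j ∈ d.Cf ∧ (i, j) ∈ UU d.M0
  · rw [recon_b1 g hb1.1 hb1.2.1 hb1.2.2]; exact hg.1.2.1 _
  · by_cases hb2 : j ∈ d.Rf ∧ i ∈ d.Cf ∧ (j, i) ∈ UU d.M0
    · rw [recon_b2 g hb2.1 hb2.2.1 hb2.2.2]; exact hg.1.2.1 _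
    · rw [recon_b0 g hb1 hb2, Dmap_M0 hWd, frozen_apply]
      split_ifs with h
      · exact Or.inl rfl
      · exact hW.1 i j

lemma recon_row_exu (hW : IsSignedPermMatrix W) (hWs : W.IsSymm) (hWd : Dmap W = d)
    (hg : NEIsSignedTransversal (shapeOf d) g) (i : Fin n) :
    ∃! j, recon d g i j ≠ 0 := by
  by_cases hiR : i ∈ d.Rf
  · obtain ⟨j₀, hj₀C, hj₀U, hj₀ne⟩ := g_row_ex hWd hg hiR
    refine ⟨j₀, by show recon d g i j₀ ≠ 0; rw [recon_b1 g hiR hj₀C hj₀U]; exact hj₀ne, ?_⟩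
    intro j hj
    by_cases hb1 : i ∈ d.Rf ∧ j ∈ d.Cf ∧ (i, j) ∈ UU d.M0
    · rw [recon_b1 g hb1.1 hb1.2.1 hb1.2.2] at hj
      have := hg.1.2.2.1 (rk d.Rf i hiR)
        (show (rk d.Cf j hb1.2.1) ∈ {j' : ℕ | g (rk d.Rf i hiR, j') ≠ 0} from hj)
        (show (rk d.Cf j₀ hj₀C) ∈ {j' : ℕ | g (rk d.Rf i hiR, j') ≠ 0} from hj₀ne)
      have h2 : (⟨rk d.Cf j hb1.2.1, rk_lt hb1.2.1⟩ : Fin d.Cf.card) =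
          ⟨rk d.Cf j₀ hj₀C, rk_lt hj₀C⟩ := Fin.ext this
      have := congrArg (fun z => ((d.Cf.orderIsoOfFin rfl z : {x // x ∈ d.Cf}) : Fin n)) h2
      simpa only [iso_rk] using this
    · exfalso
      by_cases hb2 : j ∈ d.Rf ∧ i ∈ d.Cf ∧ (j, i) ∈ UU d.M0
      · exact RC_disj hW hWs hWd hiR hb2.2.1
      · rw [recon_b0 g hb1 hb2, Dmap_M0 hWd] at hj
        exact hj (frozen_row_zero_R hW (by rw [← Dmap_Rf hWd]; exact hiR) j)
  · by_cases hiC : i ∈ d.Cf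
    · obtain ⟨j₀, hj₀R, hj₀U, hj₀ne⟩ := g_col_ex hWd hg hiC
      refine ⟨j₀, by show recon d g i j₀ ≠ 0; rw [recon_b2 g hj₀R hiC hj₀U]; exact hj₀ne, ?_⟩
      intro j hj
      by_cases hb1 : i ∈ d.Rf ∧ j ∈ d.Cf ∧ (i, j) ∈ UU d.M0
      · exact absurd hb1.1 hiR
      · by_cases hb2 : j ∈ d.Rf ∧ i ∈ d.Cf ∧ (j, i) ∈ UU d.M0
        · rw [recon_b2 g hb2.1 hb2.2.1 hb2.2.2] at hj
          have := hg.1.2.2.2 (rk d.Cf i hiC)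
            (show (rk d.Rf j hb2.1) ∈ {i' : ℕ | g (i', rk d.Cf i hiC) ≠ 0} from hj)
            (show (rk d.Rf j₀ hj₀R) ∈ {i' : ℕ | g (i', rk d.Cf i hiC) ≠ 0} from hj₀ne)
          have h2 : (⟨rk d.Rf j hb2.1, rk_lt hb2.1⟩ : Fin d.Rf.card) =
              ⟨rk d.Rf j₀ hj₀R, rk_lt hj₀R⟩ := Fin.ext this
          have := congrArg (fun z => ((d.Rf.orderIsoOfFin rfl z : {x // x ∈ d.Rf}) : Fin n)) h2
          simpa only [iso_rk] using this
        · exfalso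
          rw [recon_b0 g hb1 hb2, Dmap_M0 hWd] at hj
          exact hj (frozen_row_zero_C hW hWs (by rw [← Dmap_Cf hWd]; exact hiC) j)
    · have hrow : ∀ j, recon d g i j = W i j := by
        intro j
        rw [recon_b0 g (fun h => hiR h.1) (fun h => hiC h.2.1), Dmap_M0 hWd]
        exact frozen_row_eq hWs (by rw [← Dmap_Rf hWd]; exact hiR)
          (by rw [← Dmap_Cf hWd]; exact hiC) j
      obtain ⟨j₀, hj₀, huniq⟩ := hW.2.1 i
      exact ⟨j₀, by show recon d g i j₀ ≠ 0; rw [hrow]; exact hj₀, fun j hj => huniq j (by have hj' : recon d g i j ≠ 0 := hj; rw [hrow] at hj'; exact hj')⟩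

lemma rows_to_cols {A : Matrix (Fin n) (Fin n) ℤ} (hsy : A.IsSymm)
    (h : ∀ i, ∃! j, A i j ≠ 0) (j : Fin n) : ∃! i, A i j ≠ 0 := by
  obtain ⟨i₀, h1, h2⟩ := h j
  refine ⟨i₀, by show A i₀ j ≠ 0; rw [symm_apply hsy]; exact h1, fun i hi => h2 i ?_⟩
  show A j i ≠ 0
  rw [symm_apply hsy]
  exact hi

lemma recon_spm (hW : IsSignedPermMatrix W) (hWs : W.IsSymm) (hWd : Dmap W = d)
    (hg : NEIsSignedTransversal (shapeOf d) g) : IsSignedPermMatrix (recon d g) :=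
  ⟨recon_entries hW hWd hg, recon_row_exu hW hWs hWd hg,
    rows_to_cols (recon_symm hWs hWd) (recon_row_exu hW hWs hWd hg)⟩

lemma recon_diag (hWd : Dmap W = d) (i : Fin n) : recon d g i i = W i i := by
  rw [recon_b0 g (fun h => absurd (UU_upper h.2.2) (lt_irrefl i))
    (fun h => absurd (UU_upper h.2.2) (lt_irrefl i)), Dmap_M0 hWd]
  exact frozen_diag W i

lemma UU_recon (hWd : Dmap W = d) : UU (recon d g) = UU d.M0 := by
  have hcenter : ∀ x y : Fin n, d.M0 x y = 1 → recon d g x y = 1 := by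
    intro x y h
    rw [recon_b0 g]
    · exact h
    · rintro ⟨-, -, hU⟩
      rw [M0_zero hWd (Or.inl hU)] at h
      exact absurd h (by norm_num)
    · rintro ⟨-, -, hU⟩
      rw [M0_zero hWd (Or.inr hU)] at h
      exact absurd h (by norm_num)
  apply Set.Subset.antisymm
  · rintro ⟨i, j⟩ ⟨x, y, hxy, h1, hix, hyj⟩
    by_cases hb1 : x ∈ d.Rf ∧ y ∈ d.Cf ∧ (x, y) ∈ UU d.M0
    · obtain ⟨x₀, y₀, hxy₀, h1₀, hx₀, hy₀⟩ := hb1.2.2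
      exact ⟨x₀, y₀, hxy₀, h1₀, lt_trans hix hx₀, lt_trans hy₀ hyj⟩
    · by_cases hb2 : y ∈ d.Rf ∧ x ∈ d.Cf ∧ (y, x) ∈ UU d.M0
      · exact absurd (UU_upper hb2.2.2) (not_lt.mpr hxy)
      · rw [recon_b0 g hb1 hb2] at h1
        exact ⟨x, y, hxy, h1, hix, hyj⟩
  · rintro ⟨i, j⟩ ⟨x, y, hxy, h1, hix, hyj⟩
    exact ⟨x, y, hxy, hcenter x y h1, hix, hyj⟩

lemma recon_Dmap (hW : IsSignedPermMatrix W) (hWs : W.IsSymm) (hWd : Dmap W = d)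
    (hg : NEIsSignedTransversal (shapeOf d) g) : Dmap (recon d g) = d := by
  have hUU := UU_recon (g := g) hWd
  have hfro : frozen (recon d g) = d.M0 := by
    ext i j
    by_cases h : (i, j) ∈ UU d.M0 ∨ (j, i) ∈ UU d.M0
    · rw [frozen_zero_of_mem (by rwa [hUU]), M0_zero hWd h]
    · rw [frozen_eq_of_notMem (by rwa [hUU]),
        recon_b0 g (fun hh => h (Or.inl hh.2.2)) (fun hh => h (Or.inr hh.2.2))]
  have hR : Rfin (recon d g) = d.Rf := by
    ext i
    rw [mem_Rfin]
    constructor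
    · rintro ⟨j, hU, hne⟩
      rw [hUU] at hU
      by_cases hb1 : i ∈ d.Rf ∧ j ∈ d.Cf ∧ (i, j) ∈ UU d.M0
      · exact hb1.1
      · exfalso
        by_cases hb2 : j ∈ d.Rf ∧ i ∈ d.Cf ∧ (j, i) ∈ UU d.M0
        · exact absurd (lt_trans (UU_upper hU) (UU_upper hb2.2.2)) (lt_irrefl i)
        · rw [recon_b0 g hb1 hb2] at hne
          exact hne (M0_zero hWd (Or.inl hU))
    · intro hi
      obtain ⟨j₀, hj₀C, hj₀U, hj₀ne⟩ := g_row_ex hWd hg hi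
      refine ⟨j₀, by rwa [hUU], ?_⟩
      rw [recon_b1 g hi hj₀C hj₀U]
      exact hj₀ne
  have hC : Cfin (recon d g) = d.Cf := by
    ext j
    rw [mem_Cfin]
    constructor
    · rintro ⟨i, hU, hne⟩
      rw [hUU] at hU
      by_cases hb1 : i ∈ d.Rf ∧ j ∈ d.Cf ∧ (i, j) ∈ UU d.M0
      · exact hb1.2.1
      · exfalso
        by_cases hb2 : j ∈ d.Rf ∧ i ∈ d.Cf ∧ (j, i) ∈ UU d.M0
        · exact absurd (lt_trans (UU_upper hU) (UU_upper hb2.2.2)) (lt_irrefl i)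
        · rw [recon_b0 g hb1 hb2] at hne
          exact hne (M0_zero hWd (Or.inl hU))
    · intro hj
      obtain ⟨i₀, hi₀R, hi₀U, hi₀ne⟩ := g_col_ex hWd hg hj
      refine ⟨i₀, by rwa [hUU], ?_⟩
      rw [recon_b1 g hi₀R hj hi₀U]
      exact hi₀ne
  cases d
  simp only [Dmap, DData.mk.injEq]
  exact ⟨hfro, hR, hC⟩

end Core4

end Stmt2Aux

namespace Stmt2Aux

section Glue

open Matrix
open scoped Classical

variable {n k : ℕ}

def ASet (π : Matrix (Fin k) (Fin k) ℤ) (F : Set (Fin n)) : Set (Matrix (Fin n) (Fin n) ℤ) :=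
  {M | IsSignedPermMatrix M ∧ M.IsSymm ∧ ¬ ContainsPattern M (doublePrimePat π) ∧
    {i | M i i ≠ 0} = F}

def TSet (π : Matrix (Fin k) (Fin k) ℤ) (S : NEShape) : Set (ℕ × ℕ → ℤ) :=
  {f | NEIsSignedTransversal S f ∧ ¬ NEContains S f π}

def Fib (π : Matrix (Fin k) (Fin k) ℤ) (F : Set (Fin n)) (d : DData n) :
    Set (Matrix (Fin n) (Fin n) ℤ) :=
  {M | M ∈ ASet π F ∧ Dmap M = d}

lemma finite_mats :
    {M : Matrix (Fin n) (Fin n) ℤ | ∀ i j, M i j = 0 ∨ M i j = 1 ∨ M i j = -1}.Finite := by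
  have h3 : ({0, 1, -1} : Set ℤ).Finite :=
    Set.Finite.insert _ (Set.Finite.insert _ (Set.finite_singleton _))
  have hpi : (Set.univ.pi fun _ : Fin n =>
      (Set.univ.pi fun _ : Fin n => ({0, 1, -1} : Set ℤ))).Finite :=
    Set.Finite.pi (fun _ => Set.Finite.pi (fun _ => h3))
  apply hpi.subset
  intro M hM
  rw [Set.mem_pi]
  intro i _
  rw [Set.mem_pi]
  intro j _
  simpa only [Set.mem_insert_iff, Set.mem_singleton_iff] using hM i j

lemma finite_fills (S : NEShape) : {f : ℕ × ℕ → ℤ | NEIsSparseFilling S f}.Finite := by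
  have h3 : ({0, 1, -1} : Set ℤ).Finite :=
    Set.Finite.insert _ (Set.Finite.insert _ (Set.finite_singleton _))
  apply Set.Finite.of_finite_image
    (f := fun (f : ℕ × ℕ → ℤ) (q : {p // p ∈ S.cells}) => f q.1)
  · have hpi : (Set.univ.pi fun _ : {p // p ∈ S.cells} => ({0, 1, -1} : Set ℤ)).Finite :=
      Set.Finite.pi (fun _ => h3)
    apply hpi.subset
    rintro h ⟨f, hf, rfl⟩
    rw [Set.mem_pi]
    intro q _
    simpa only [Set.mem_insert_iff, Set.mem_singleton_iff] using hf.2.1 q.1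
  · rintro f hf f' hf' hff
    funext p
    by_cases hp : p ∈ S.cells
    · exact congrFun hff ⟨p, hp⟩
    · have h1 : f p = 0 := by by_contra h; exact hp (hf.1 p h)
      have h2 : f' p = 0 := by by_contra h; exact hp (hf'.1 p h)
      rw [h1, h2]

lemma finite_TSet {π : Matrix (Fin k) (Fin k) ℤ} (S : NEShape) : (TSet π S).Finite :=
  (finite_fills S).subset (fun f hf => hf.1.1)

lemma finite_ASet {π : Matrix (Fin k) (Fin k) ℤ} {F : Set (Fin n)} : (ASet π F).Finite :=
  finite_mats.subset (fun M hM => hM.1.1)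

lemma finite_Fib {π : Matrix (Fin k) (Fin k) ℤ} {F : Set (Fin n)} {d : DData n} :
    (Fib π F d).Finite :=
  finite_mats.subset (fun M hM => hM.1.1.1)

noncomputable def fibEquiv {π : Matrix (Fin k) (Fin k) ℤ} (hπ : IsSignedPermMatrix π)
    (hk : 0 < k) {F : Set (Fin n)} {d : DData n} {W : Matrix (Fin n) (Fin n) ℤ}
    (hW : IsSignedPermMatrix W) (hWs : W.IsSymm) (hWF : {i | W i i ≠ 0} = F)
    (hWd : Dmap W = d) : ↥(Fib π F d) ≃ ↥(TSet π (shapeOf d)) where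
  toFun M := ⟨fillOf d M.1, by
    obtain ⟨⟨hspm, hsym, havoid, hFix⟩, hDm⟩ := M.2
    refine ⟨fill_transversal hspm hsym hDm, fun hcont => havoid ?_⟩
    exact (contains_dpp_iff hspm hsym hπ).mpr
      ((center_iff_necontains hπ hk hspm hDm).mpr hcont)⟩
  invFun g := ⟨recon d g.1, by
    obtain ⟨htr, havoid⟩ := g.2
    have hspm := recon_spm hW hWs hWd htr
    have hsym := recon_symm (g := g.1) hWs hWd
    have hdm := recon_Dmap hW hWs hWd htr
    refine ⟨⟨hspm, hsym, fun hcont => havoid ?_, ?_⟩, hdm⟩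
    · have h1 := (contains_dpp_iff hspm hsym hπ).mp hcont
      have h2 := (center_iff_necontains hπ hk hspm hdm).mp h1
      rwa [fill_recon htr] at h2
    · rw [← hWF]
      ext i
      simp only [Set.mem_setOf_eq]
      rw [recon_diag hWd]⟩
  left_inv M := Subtype.ext (recon_fill M.2.1.1 M.2.1.2.1 M.2.2)
  right_inv g := Subtype.ext (fill_recon g.2.1)

lemma fib_nonempty_equiv {σ τ : Matrix (Fin k) (Fin k) ℤ} (hσ : IsSignedPermMatrix σ)
    (hτ : IsSignedPermMatrix τ) (heq : NEShapeWilfEquiv σ τ) (hk : 0 < k)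
    (F : Set (Fin n)) (d : DData n) : Nonempty (↥(Fib σ F d) ≃ ↥(Fib τ F d)) := by
  by_cases hex : ∃ W : Matrix (Fin n) (Fin n) ℤ,
      IsSignedPermMatrix W ∧ W.IsSymm ∧ {i | W i i ≠ 0} = F ∧ Dmap W = d
  · obtain ⟨W, hW, hWs, hWF, hWd⟩ := hex
    have e1 := fibEquiv hσ hk hW hWs hWF hWd
    have e2 := fibEquiv hτ hk hW hWs hWF hWd
    haveI := (finite_Fib (π := σ) (F := F) (d := d)).to_subtype
    haveI := (finite_Fib (π := τ) (F := F) (d := d)).to_subtype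
    refine Finite.card_eq.mp ?_
    calc Nat.card ↥(Fib σ F d) = Nat.card ↥(TSet σ (shapeOf d)) := Nat.card_congr e1
    _ = (TSet σ (shapeOf d)).ncard := Nat.card_coe_set_eq _
    _ = (TSet τ (shapeOf d)).ncard := heq (shapeOf d)
    _ = Nat.card ↥(TSet τ (shapeOf d)) := (Nat.card_coe_set_eq _).symm
    _ = Nat.card ↥(Fib τ F d) := Nat.card_congr e2.symm
  · have h1 : IsEmpty ↥(Fib σ F d) := by
      constructor
      rintro ⟨M, ⟨⟨a, b, c, e⟩, hd⟩⟩
      exact hex ⟨M, a, b, e, hd⟩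
    have h2 : IsEmpty ↥(Fib τ F d) := by
      constructor
      rintro ⟨M, ⟨⟨a, b, c, e⟩, hd⟩⟩
      exact hex ⟨M, a, b, e, hd⟩
    exact ⟨Equiv.equivOfIsEmpty _ _⟩

noncomputable def sigmaEquiv (π : Matrix (Fin k) (Fin k) ℤ) (F : Set (Fin n)) :
    ↥(ASet π F) ≃ Σ d : DData n, ↥(Fib π F d) where
  toFun M := ⟨Dmap M.1, ⟨M.1, M.2, rfl⟩⟩
  invFun x := ⟨x.2.1, x.2.2.1⟩
  left_inv M := rfl
  right_inv := by rintro ⟨d, M, hM, rfl⟩; rfl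

lemma part1 {σ τ : Matrix (Fin k) (Fin k) ℤ} (hσ : IsSignedPermMatrix σ)
    (hτ : IsSignedPermMatrix τ) (heq : NEShapeWilfEquiv σ τ) (hk : 0 < k)
    (F : Set (Fin n)) : (ASet σ F).ncard = (ASet τ F).ncard := by
  rw [← Nat.card_coe_set_eq, ← Nat.card_coe_set_eq]
  exact Nat.card_congr (((sigmaEquiv σ F).trans (Equiv.sigmaCongrRight
    (fun d => Classical.choice (fib_nonempty_equiv hσ hτ heq hk F d)))).trans
    (sigmaEquiv τ F).symm)

noncomputable def sigmaEquivF (π : Matrix (Fin k) (Fin k) ℤ) :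
    ↥{M : Matrix (Fin n) (Fin n) ℤ | IsSignedPermMatrix M ∧ M.IsSymm ∧
      ¬ ContainsPattern M (doublePrimePat π)} ≃ Σ F : Set (Fin n), ↥(ASet π F) where
  toFun M := ⟨{i | M.1 i i ≠ 0}, ⟨M.1, M.2.1, M.2.2.1, M.2.2.2, rfl⟩⟩
  invFun x := ⟨x.2.1, x.2.2.1, x.2.2.2.1, x.2.2.2.2.1⟩
  left_inv M := rfl
  right_inv := by rintro ⟨F, M, h1, h2, h3, rfl⟩; rfl

lemma part2 {σ τ : Matrix (Fin k) (Fin k) ℤ} (hσ : IsSignedPermMatrix σ)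
    (hτ : IsSignedPermMatrix τ) (heq : NEShapeWilfEquiv σ τ) (hk : 0 < k) :
    SIAvoidCount n (doublePrimePat σ) = SIAvoidCount n (doublePrimePat τ) := by
  unfold SIAvoidCount
  rw [← Nat.card_coe_set_eq, ← Nat.card_coe_set_eq]
  refine Nat.card_congr ((sigmaEquivF σ).trans (Equiv.trans
    (Equiv.sigmaCongrRight fun F => ?_) (sigmaEquivF τ).symm))
  haveI := (finite_ASet (π := σ) (F := F)).to_subtype
  haveI := (finite_ASet (π := τ) (F := F)).to_subtype
  refine Classical.choice (Finite.card_eq.mp ?_)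
  rw [Nat.card_coe_set_eq, Nat.card_coe_set_eq]
  exact part1 hσ hτ heq hk F

end Glue

end Stmt2Aux

/-- if σ and τ are NE-shape Wilf equivalent signed permutation matrices,
then for every n ≥ 1 and every set F of positions, the σ''-avoiding signed involutions
in SI_n with fixed-point set F are equinumerous with the τ''-avoiding ones;
in particular |SI_n(σ'')| = |SI_n(τ'')|. -/
theorem stmt2 {k : ℕ} (σ τ : Matrix (Fin k) (Fin k) ℤ)
    (hσ : IsSignedPermMatrix σ) (hτ : IsSignedPermMatrix τ)
    (heq : NEShapeWilfEquiv σ τ) :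
    ∀ n : ℕ, 1 ≤ n →
      (∀ F : Set (Fin n),
        {M : Matrix (Fin n) (Fin n) ℤ | IsSignedPermMatrix M ∧ M.IsSymm ∧
          ¬ ContainsPattern M (doublePrimePat σ) ∧ {i | M i i ≠ 0} = F}.ncard =
        {M : Matrix (Fin n) (Fin n) ℤ | IsSignedPermMatrix M ∧ M.IsSymm ∧
          ¬ ContainsPattern M (doublePrimePat τ) ∧ {i | M i i ≠ 0} = F}.ncard) ∧
      SIAvoidCount n (doublePrimePat σ) = SIAvoidCount n (doublePrimePat τ) := by
  intro n hn
  rcases Nat.eq_zero_or_pos k with hk0 | hk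
  · subst hk0
    have hστ : σ = τ := by ext i j; exact i.elim0
    subst hστ
    exact ⟨fun F => rfl, rfl⟩
  · exact ⟨fun F => Stmt2Aux.part1 hσ hτ heq hk F, Stmt2Aux.part2 hσ hτ heq hk⟩
end
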